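/- arXiv:math/0606741 — 5 statements merged into one kernel-verified Lean document; each statement's English description precedes it below -/
import Mathlib

section
/- With Ψ as above, Ψ commutes with the first n face maps: for 0 ≤ i ≤ n, Ψ(dⁱφ)(x⁰,…,xⁿ⁺¹) = Ψφ(x⁰,…,xⁱxⁱ⁺¹,…,xⁿ⁺¹) where dⁱφ(h,a⁰,…,aⁿ⁺¹) = φ(h, a⁰,…,aⁱaⁱ⁺¹,…,aⁿ⁺¹) and the x's are elementary tensors aʲ ⊗ hʲ in A ⋊ H. -/
noncomputable section

open TensorProduct

variable {H A : Type} [Ring H] [HopfAlgebra ℂ H] [Ring A] [Algebra ℂ A]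

/-- `sweedler N Δ₁ Δ₂ k g F` is the Sweedler sum `Σ F (g₍₁₎, …, g₍ₖ₊₁₎)`, computed
from a chosen finite representation `comul g = Σ_{i < N g} Δ₁ g i ⊗ Δ₂ g i` of the
comultiplication. -/
def sweedler (N : H → ℕ) (Δ₁ Δ₂ : H → ℕ → H) :
    (k : ℕ) → H → ((Fin (k+1) → H) → ℂ) → ℂ
  | 0, g, F => F ![g]
  | k+1, g, F => ∑ i ∈ Finset.range (N g),
      sweedler N Δ₁ Δ₂ k (Δ₂ g i) (fun v => F (Fin.cons (Δ₁ g i) v))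

/-- The multiplication of the crossed product `A ⋊ H`, as a linear map on
`(A ⊗ H) ⊗ (A ⊗ H)`; on pure tensors it is `(a ⊗ h)(b ⊗ g) = a h₍₁₎(b) ⊗ h₍₂₎ g`. -/
def cpMul (ρ : H →ₗ[ℂ] A →ₗ[ℂ] A) :
    (A ⊗[ℂ] H) ⊗[ℂ] (A ⊗[ℂ] H) →ₗ[ℂ] A ⊗[ℂ] H :=
  (LinearMap.rTensor H (LinearMap.mul' ℂ A)) ∘ₗ
  (TensorProduct.assoc ℂ A A H).symm.toLinearMap ∘ₗ
  (LinearMap.lTensor A (TensorProduct.map (TensorProduct.lift ρ) (LinearMap.mul' ℂ H))) ∘ₗ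
  (LinearMap.lTensor A (TensorProduct.tensorTensorTensorComm ℂ H H A H).toLinearMap) ∘ₗ
  (LinearMap.lTensor A (LinearMap.rTensor (A ⊗[ℂ] H) (Coalgebra.comul (R := ℂ)))) ∘ₗ
  (TensorProduct.assoc ℂ A H (A ⊗[ℂ] H)).toLinearMap

/-- The tuple obtained from `x` by replacing the pair `(xʲ, xʲ⁺¹)` by the single
entry `y` (used with `y = xʲ xʲ⁺¹` for the `j`-th face map). -/
def faceTup {α : Type} {n : ℕ} (j : Fin (n+1)) (y : α) (x : Fin (n+2) → α) :
    Fin (n+1) → α :=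
  fun k => if (k : ℕ) < (j : ℕ) then x k.castSucc else if k = j then y else x k.succ

/-- The `i`-th term of the product `(p.1 ⊗ p.2)(q.1 ⊗ q.2)` in `A ⋊ H`, for the chosen
representation of the comultiplication: `p.1 · (Δ₁ p.2 i)(q.1) ⊗ (Δ₂ p.2 i) q.2`. -/
def cpPairTerm (Δ₁ Δ₂ : H → ℕ → H) (ρ : H →ₗ[ℂ] A →ₗ[ℂ] A) (p q : A × H) (i : ℕ) :
    A × H :=
  (p.1 * ρ (Δ₁ p.2 i) q.1, Δ₂ p.2 i * q.2)

/-- The Hochschild coboundary of a cochain on the crossed product `A ⋊ H`. -/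
def cpb (ρ : H →ₗ[ℂ] A →ₗ[ℂ] A) {n : ℕ} (f : (Fin (n+1) → A ⊗[ℂ] H) → ℂ) :
    (Fin (n+2) → A ⊗[ℂ] H) → ℂ := fun x =>
  (∑ j : Fin (n+1), (-1 : ℂ) ^ (j : ℕ) *
      f (faceTup j (cpMul ρ (x j.castSucc ⊗ₜ[ℂ] x j.succ)) x))
  + (-1 : ℂ) ^ (n+1) *
      f (fun k => if (k : ℕ) = 0 then cpMul ρ (x (Fin.last (n+1)) ⊗ₜ[ℂ] x 0)
                  else x k.castSucc)

/-- `f` vanishes whenever some argument in position `≥ 1` lies in the subalgebra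
`1 ⊗ H` of `A ⋊ H`. -/
def HConstVanish {m : ℕ} (f : (Fin m → A ⊗[ℂ] H) → ℂ) : Prop :=
  ∀ x : Fin m → A ⊗[ℂ] H,
    (∃ j : Fin m, 0 < (j : ℕ) ∧ ∃ h : H, x j = (1 : A) ⊗ₜ[ℂ] h) → f x = 0

/-- An `H`-constant cochain on `A ⋊ H`: both `f` and `bf` vanish whenever some
argument in position `≥ 1` lies in `1 ⊗ H`. -/
def IsHConstant (ρ : H →ₗ[ℂ] A →ₗ[ℂ] A) {n : ℕ}
    (f : MultilinearMap ℂ (fun _ : Fin (n+1) => A ⊗[ℂ] H) ℂ) : Prop :=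
  HConstVanish ⇑f ∧ HConstVanish (cpb ρ ⇑f)

/-- Auxiliary recursion for `Ψ`: processes the pairs `x¹, …, xᵏ`, keeping an
accumulated Hopf algebra element `g`; at each step `Δg = g₍₁₎ ⊗ g₍₂₎` is split, the
current slot becomes `g₍₁₎(aʲ)` and the accumulator becomes `g₍₂₎ hʲ`. -/
def psiAux (N : H → ℕ) (Δ₁ Δ₂ : H → ℕ → H) (ρ : H →ₗ[ℂ] A →ₗ[ℂ] A) :
    (k : ℕ) → H → (Fin k → A × H) → (H → (Fin k → A) → ℂ) → ℂ
  | 0, g, _, F => F g ![]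
  | k+1, g, x, F => ∑ i ∈ Finset.range (N g),
      psiAux N Δ₁ Δ₂ ρ k (Δ₂ g i * (x 0).2) (fun j => x j.succ)
        (fun h v => F h (Fin.cons (ρ (Δ₁ g i) (x 0).1) v))

/-- The value of `Ψφ` on the elementary tensors `a⁰ ⊗ h⁰, …, aⁿ ⊗ hⁿ`:
`Ψ(φ)(a⁰⊗h⁰, …, aⁿ⊗hⁿ) = φ(h⁰₍ₙ₊₁₎ ⋯ h^{n-1}₍₂₎ hⁿ, a⁰, h⁰₍₁₎(a¹), …,
h⁰₍ₙ₎⋯h^{n-1}₍₁₎(aⁿ))`. -/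
def psiV (N : H → ℕ) (Δ₁ Δ₂ : H → ℕ → H) (ρ : H →ₗ[ℂ] A →ₗ[ℂ] A) {n : ℕ}
    (φf : H → (Fin (n+1) → A) → ℂ) (x : Fin (n+1) → A × H) : ℂ :=
  psiAux N Δ₁ Δ₂ ρ n ((x 0).2) (fun j => x j.succ)
    (fun h v => φf h (Fin.cons (x 0).1 v))

/-- The equivariance condition `φ(S(g₍₂₎) h g₍₁₎, a⁰, …, aⁿ) =
φ(h, g₍₁₎(a⁰), …, g₍ₙ₊₁₎(aⁿ))` for a cochain `φ : H ⊗ A^{⊗(n+1)} → ℂ`. -/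
def IsEquivariant (N : H → ℕ) (Δ₁ Δ₂ : H → ℕ → H) (ρ : H →ₗ[ℂ] A →ₗ[ℂ] A) {n : ℕ}
    (φf : H → (Fin (n+1) → A) → ℂ) : Prop :=
  ∀ (g h : H) (a : Fin (n+1) → A),
    sweedler N Δ₁ Δ₂ 1 g
      (fun ℓ => φf (HopfAlgebra.antipode (R := ℂ) (ℓ 1) * h * ℓ 0) a)
      = sweedler N Δ₁ Δ₂ n g (fun ℓ => φf h (fun j => ρ (ℓ j) (a j)))

/-- The cyclic operator on equivariant cochains:
`t φ(h, a⁰, …, aⁿ) = φ(h₍₂₎, S⁻¹(h₍₁₎)(aⁿ), a⁰, …, aⁿ⁻¹)`. -/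
def cycOpEq (N : H → ℕ) (Δ₁ Δ₂ : H → ℕ → H) (ρ : H →ₗ[ℂ] A →ₗ[ℂ] A)
    (Sinv : H →ₗ[ℂ] H) {n : ℕ} (φf : H → (Fin (n+1) → A) → ℂ) :
    H → (Fin (n+1) → A) → ℂ := fun h a =>
  sweedler N Δ₁ Δ₂ 1 h (fun ℓ =>
    φf (ℓ 1) (Fin.cons (ρ (Sinv (ℓ 0)) (a (Fin.last n))) (fun j : Fin n => a j.castSucc)))

/-- The map `Φ`: `(Φf)(h, a⁰, …, aⁿ) = f(a⁰ ⊗ 1, …, aⁿ⁻¹ ⊗ 1, aⁿ ⊗ h)`. -/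
def phiV {n : ℕ} (f : MultilinearMap ℂ (fun _ : Fin (n+1) => A ⊗[ℂ] H) ℂ) :
    H → (Fin (n+1) → A) → ℂ := fun h a =>
  f (fun i => if i = Fin.last n then a i ⊗ₜ[ℂ] h else a i ⊗ₜ[ℂ] (1 : H))


/-!
`psiAux` evaluates `Ψ` slot by slot: an accumulated element `g ∈ H` is split as
`g₍₁₎ ⊗ g₍₂₎`, `g₍₁₎` acts on the next entry of `A` and `g₍₂₎ hʲ` is passed on. A face at a
position `≥ 1` commutes with such a step, so by induction everything reduces to merging the
first two entries `(a, h), (b, h')` under an accumulator `g`. On one side `g₍₁₎` acts on `a` and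
`(g₍₂₎ h)₍₁₎ = g₍₂₎ h₍₁₎` on `b`; on the other `g` acts on `a h₍₁₎(b)`, which the module-algebra
axiom turns into `g₍₁₎(a) g₍₂₎(h₍₁₎ b)`. Both sides are then one trilinear functional evaluated
on `(id ⊗ Δ)Δg` and `(Δ ⊗ id)Δg` respectively, and coassociativity closes the argument.
Since `psiAux` is computed from a chosen representation of `Δ`, each rewriting step uses that
`psiAux` is linear in the accumulator, hence independent of that choice.
-/

open Finset

section Sweedler

variable (R : Type*) {C : Type*} [CommSemiring R] [AddCommMonoid C] [Module R C] [Coalgebra R C]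

def IsComulRep (N : C → ℕ) (Δ₁ Δ₂ : C → ℕ → C) : Prop :=
  ∀ g : C, Coalgebra.comul (R := R) g = ∑ i ∈ range (N g), Δ₁ g i ⊗ₜ[R] Δ₂ g i

variable {R} {N : C → ℕ} {Δ₁ Δ₂ : C → ℕ → C}

theorem IsComulRep.comul_eq (hrep : IsComulRep R N Δ₁ Δ₂) (g : C) :
    Coalgebra.comul (R := R) g = ∑ i ∈ range (N g), Δ₁ g i ⊗ₜ[R] Δ₂ g i :=
  hrep g

theorem IsComulRep.sum_coassoc {M : Type*} [AddCommMonoid M] [Module R M]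
    (hrep : IsComulRep R N Δ₁ Δ₂) (T : C →ₗ[R] C →ₗ[R] C →ₗ[R] M) (g : C) :
    ∑ m ∈ range (N g), ∑ q ∈ range (N (Δ₂ g m)), T (Δ₁ g m) (Δ₁ (Δ₂ g m) q) (Δ₂ (Δ₂ g m) q)
      = ∑ m ∈ range (N g), ∑ p ∈ range (N (Δ₁ g m)),
          T (Δ₁ (Δ₁ g m) p) (Δ₂ (Δ₁ g m) p) (Δ₂ g m) := by
  have h := congrArg (TensorProduct.lift (TensorProduct.uncurry _ _ _ _ ∘ₗ T))
    (Coalgebra.coassoc_apply (R := R) g)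
  simp only [hrep.comul_eq, map_sum, LinearMap.rTensor_tmul, LinearMap.lTensor_tmul,
    TensorProduct.sum_tmul, TensorProduct.tmul_sum, TensorProduct.assoc_tmul,
    TensorProduct.lift.tmul, LinearMap.comp_apply, TensorProduct.uncurry_apply] at h
  exact h.symm

end Sweedler

theorem IsComulRep.comul_mul {R B : Type*} [CommSemiring R] [Semiring B] [Bialgebra R B]
    {N : B → ℕ} {Δ₁ Δ₂ : B → ℕ → B} (hrep : IsComulRep R N Δ₁ Δ₂) (g h : B) :
    Coalgebra.comul (R := R) (g * h) = ∑ qr ∈ range (N g) ×ˢ range (N h),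
      (Δ₁ g qr.1 * Δ₁ h qr.2) ⊗ₜ[R] (Δ₂ g qr.1 * Δ₂ h qr.2) := by
  rw [Bialgebra.comul_mul, hrep.comul_eq, hrep.comul_eq, sum_mul_sum, sum_product]
  simp only [Algebra.TensorProduct.tmul_mul_tmul]

abbrev HCochain (V B : Type) [AddCommMonoid V] [Module ℂ V] [AddCommMonoid B] [Module ℂ B]
    (k : ℕ) : Type :=
  V →ₗ[ℂ] MultilinearMap ℂ (fun _ : Fin k => B) ℂ

namespace HCochain

variable {V B : Type} [AddCommMonoid V] [Module ℂ V] {k : ℕ}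

def curryFirst [AddCommMonoid B] [Module ℂ B] (φ : HCochain V B (k+1)) :
    B →ₗ[ℂ] HCochain V B k :=
  ((multilinearCurryLeftEquiv ℂ (fun _ : Fin (k+1) => B) ℂ).toLinearMap ∘ₗ φ).flip

@[simp]
theorem curryFirst_apply [AddCommMonoid B] [Module ℂ B] (φ : HCochain V B (k+1)) (c : B) (h : V)
    (v : Fin k → B) : φ.curryFirst c h v = φ h (Fin.cons c v) :=
  rfl

def mulLeftFirst [Ring B] [Algebra ℂ B] (c : B) (φ : HCochain V B (k+1)) : HCochain V B (k+1) :=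
  MultilinearMap.compLinearMapₗ
    (Function.update (fun _ => LinearMap.id) 0 (LinearMap.mulLeft ℂ c)) ∘ₗ φ

theorem mulLeftFirst_apply [Ring B] [Algebra ℂ B] (c : B) (φ : HCochain V B (k+1)) (h : V)
    (v : Fin (k+1) → B) :
    mulLeftFirst c φ h v = φ h (Fin.cons (c * v 0) (Fin.tail v)) := by
  simp only [mulLeftFirst, LinearMap.comp_apply, MultilinearMap.compLinearMapₗ_apply,
    MultilinearMap.compLinearMap_apply]
  congr 1
  refine funext fun i => Fin.cases ?_ (fun i => ?_) i <;> simp [Fin.succ_ne_zero, Fin.tail]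

end HCochain

theorem faceTup_zero {α : Type} {n : ℕ} (y : α) (z : Fin (n+2) → α) :
    faceTup 0 y z = Fin.cons y (fun k => z k.succ.succ) := by
  funext k
  refine Fin.cases ?_ (fun k => ?_) k <;> simp [faceTup, Fin.succ_ne_zero]

theorem faceTup_succ {α : Type} {n : ℕ} (j : Fin (n+1)) (y : α) (z : Fin (n+3) → α) :
    faceTup j.succ y z = Fin.cons (z 0) (faceTup j y (Fin.tail z)) := by
  funext k
  refine Fin.cases ?_ (fun k => ?_) k
  · simp [faceTup]
  · simp [faceTup, Fin.tail, Fin.succ_inj]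

section Psi

variable {N : H → ℕ} {Δ₁ Δ₂ : H → ℕ → H} {ρ : H →ₗ[ℂ] A →ₗ[ℂ] A}

theorem psiAux_succ (k : ℕ) (g : H) (x : Fin (k+1) → A × H) (F : H → (Fin (k+1) → A) → ℂ) :
    psiAux N Δ₁ Δ₂ ρ (k+1) g x F = ∑ i ∈ range (N g),
      psiAux N Δ₁ Δ₂ ρ k (Δ₂ g i * (x 0).2) (fun j => x j.succ)
        (fun h v => F h (Fin.cons (ρ (Δ₁ g i) (x 0).1) v)) :=
  rfl

theorem isLinearMap_psiAux_fun (k : ℕ) (g : H) (x : Fin k → A × H) :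
    IsLinearMap ℂ (psiAux N Δ₁ Δ₂ ρ k g x) := by
  induction k generalizing g with
  | zero => exact ⟨fun _ _ => rfl, fun _ _ => rfl⟩
  | succ k ih =>
    refine ⟨fun F G => ?_, fun c F => ?_⟩
    · simp only [psiAux_succ, ← sum_add_distrib]
      exact sum_congr rfl fun i _ => (ih _ _).map_add _ _
    · simp only [psiAux_succ, smul_sum]
      exact sum_congr rfl fun i _ => (ih _ _).map_smul _ _

theorem psiAux_sum_fun {k : ℕ} (g : H) (x : Fin k → A × H) {ι : Type*} (S : Finset ι)
    (F : ι → H → (Fin k → A) → ℂ) :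
    psiAux N Δ₁ Δ₂ ρ k g x (fun h v => ∑ p ∈ S, F p h v)
      = ∑ p ∈ S, psiAux N Δ₁ Δ₂ ρ k g x (F p) := by
  have hsum : (fun h v => ∑ p ∈ S, F p h v) = ∑ p ∈ S, F p := by
    ext h v
    simp only [Finset.sum_apply]
  rw [hsum]
  exact map_sum (IsLinearMap.mk' _ (isLinearMap_psiAux_fun k g x)) F S

/-- Linearity in the accumulator is an argument here because its proof, by induction on `k`,
goes through this bilinear map at the previous level. -/
def psiAuxBilin {k : ℕ} (x : Fin k → A × H)
    (hlin : ∀ ψ : HCochain H A k, IsLinearMap ℂ fun g => psiAux N Δ₁ Δ₂ ρ k g x fun h v => ψ h v) :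
    HCochain H A k →ₗ[ℂ] H →ₗ[ℂ] ℂ :=
  LinearMap.mk₂ ℂ (fun ψ g => psiAux N Δ₁ Δ₂ ρ k g x fun h v => ψ h v)
    (fun _ _ g => (isLinearMap_psiAux_fun k g x).map_add _ _)
    (fun _ _ g => (isLinearMap_psiAux_fun k g x).map_smul _ _)
    (fun ψ _ _ => (hlin ψ).map_add _ _) (fun _ ψ _ => (hlin ψ).map_smul _ _)

def psiAuxStep {k : ℕ} (x : Fin (k+1) → A × H) (ψ : HCochain H A (k+1))
    (hlin : ∀ ψ : HCochain H A k,
      IsLinearMap ℂ fun g => psiAux N Δ₁ Δ₂ ρ k g (fun j => x j.succ) fun h v => ψ h v) :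
    H →ₗ[ℂ] H →ₗ[ℂ] ℂ :=
  (psiAuxBilin _ hlin ∘ₗ ψ.curryFirst ∘ₗ ρ.flip (x 0).1).compl₂ (LinearMap.mulRight ℂ (x 0).2)

theorem psiAux_succ_eq_lift (hrep : IsComulRep ℂ N Δ₁ Δ₂) {k : ℕ} (x : Fin (k+1) → A × H)
    (ψ : HCochain H A (k+1))
    (hlin : ∀ ψ : HCochain H A k,
      IsLinearMap ℂ fun g => psiAux N Δ₁ Δ₂ ρ k g (fun j => x j.succ) fun h v => ψ h v)
    (g : H) :
    psiAux N Δ₁ Δ₂ ρ (k+1) g x (fun h v => ψ h v)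
      = TensorProduct.lift (psiAuxStep x ψ hlin) (Coalgebra.comul (R := ℂ) g) := by
  simp only [psiAux_succ, hrep.comul_eq, map_sum, TensorProduct.lift.tmul]
  rfl

theorem isLinearMap_psiAux_acc (hrep : IsComulRep ℂ N Δ₁ Δ₂) (k : ℕ) (x : Fin k → A × H)
    (ψ : HCochain H A k) :
    IsLinearMap ℂ fun g => psiAux N Δ₁ Δ₂ ρ k g x fun h v => ψ h v := by
  induction k with
  | zero => exact ⟨fun g g' => by simp [psiAux], fun c g => by simp [psiAux]⟩
  | succ k ih =>
    rw [funext (psiAux_succ_eq_lift hrep x ψ fun ψ' => ih _ ψ')]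
    exact (TensorProduct.lift _ ∘ₗ Coalgebra.comul).isLinear

theorem psiAux_succ_eq_sum_of_comul_eq (hrep : IsComulRep ℂ N Δ₁ Δ₂) {k : ℕ}
    (x : Fin (k+1) → A × H) (ψ : HCochain H A (k+1)) {g : H} {ι : Type*} {S : Finset ι}
    {s t : ι → H} (hst : Coalgebra.comul (R := ℂ) g = ∑ i ∈ S, s i ⊗ₜ[ℂ] t i) :
    psiAux N Δ₁ Δ₂ ρ (k+1) g x (fun h v => ψ h v)
      = ∑ i ∈ S, psiAux N Δ₁ Δ₂ ρ k (t i * (x 0).2) (fun j => x j.succ)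
          (fun h v => ψ h (Fin.cons (ρ (s i) (x 0).1) v)) := by
  rw [psiAux_succ_eq_lift hrep x ψ (isLinearMap_psiAux_acc hrep k _), hst, map_sum]
  simp only [TensorProduct.lift.tmul]
  rfl

variable (ρ) in
def psiAuxTrilin (hrep : IsComulRep ℂ N Δ₁ Δ₂) {k : ℕ}
    (z : Fin k → A × H) (φ : HCochain H A (k+1)) (a b : A) (e : H) :
    H →ₗ[ℂ] H →ₗ[ℂ] H →ₗ[ℂ] ℂ :=
  ((LinearMap.mul ℂ A).compl₁₂ (ρ.flip a) (ρ.flip b)).compr₂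
    ((psiAuxBilin z (isLinearMap_psiAux_acc (ρ := ρ) hrep k z) ∘ₗ φ.curryFirst).compl₂
      (LinearMap.mulRight ℂ e))

theorem psiAuxTrilin_apply (hrep : IsComulRep ℂ N Δ₁ Δ₂) {k : ℕ} (z : Fin k → A × H)
    (φ : HCochain H A (k+1)) (a b : A) (e u v w : H) :
    psiAuxTrilin ρ hrep z φ a b e u v w
      = psiAux N Δ₁ Δ₂ ρ k (w * e) z (fun h v' => φ h (Fin.cons (ρ u a * ρ v b) v')) :=
  rfl

theorem psiAux_face_zero_eq_sum (hrep : IsComulRep ℂ N Δ₁ Δ₂)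
    (hρ_mul : ∀ g h : H, ρ (g * h) = ρ g ∘ₗ ρ h) {k : ℕ} (g : H) (y : Fin (k+2) → A × H)
    (φ : HCochain H A (k+1)) :
    psiAux N Δ₁ Δ₂ ρ (k+2) g y (fun h v => φ h (faceTup 0 (v 0 * v 1) v))
      = ∑ r ∈ range (N (y 0).2), ∑ i ∈ range (N g), ∑ q ∈ range (N (Δ₂ g i)),
          psiAuxTrilin ρ hrep (fun j => y j.succ.succ) φ (y 0).1 (ρ (Δ₁ (y 0).2 r) (y 1).1)
            (Δ₂ (y 0).2 r * (y 1).2) (Δ₁ g i) (Δ₁ (Δ₂ g i) q) (Δ₂ (Δ₂ g i) q) := by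
  calc _ = ∑ i ∈ range (N g), psiAux N Δ₁ Δ₂ ρ (k+1) (Δ₂ g i * (y 0).2) (fun j => y j.succ)
          (fun h v => φ.mulLeftFirst (ρ (Δ₁ g i) (y 0).1) h v) := by
        simp only [psiAux_succ, faceTup_zero, HCochain.mulLeftFirst_apply, Fin.cons_zero,
          Fin.cons_one, Fin.cons_succ, Fin.tail_cons]
    _ = ∑ i ∈ range (N g), ∑ qr ∈ range (N (Δ₂ g i)) ×ˢ range (N (y 0).2),
          psiAux N Δ₁ Δ₂ ρ k ((Δ₂ (Δ₂ g i) qr.1 * Δ₂ (y 0).2 qr.2) * (y 1).2)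
            (fun j => y j.succ.succ) (fun h v => φ.mulLeftFirst (ρ (Δ₁ g i) (y 0).1) h
              (Fin.cons (ρ (Δ₁ (Δ₂ g i) qr.1 * Δ₁ (y 0).2 qr.2) (y 1).1) v)) :=
        sum_congr rfl fun i _ =>
          psiAux_succ_eq_sum_of_comul_eq hrep _ _ (hrep.comul_mul _ _)
    _ = _ := by
        simp only [sum_product, psiAuxTrilin_apply, HCochain.mulLeftFirst_apply, hρ_mul,
          LinearMap.comp_apply, mul_assoc, Fin.cons_zero, Fin.tail_cons]
        rw [sum_comm]
        exact sum_congr rfl fun r _ => sum_comm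

theorem psiAux_cons_mul_eq_sum (hrep : IsComulRep ℂ N Δ₁ Δ₂)
    (hact_mul : ∀ (h : H) (a b : A),
      ρ h (a * b) = ∑ i ∈ range (N h), ρ (Δ₁ h i) a * ρ (Δ₂ h i) b)
    {k : ℕ} (g : H) (a b : A) (e : H) (z : Fin k → A × H) (φ : HCochain H A (k+1)) :
    psiAux N Δ₁ Δ₂ ρ (k+1) g (Fin.cons (a * b, e) z) (fun h v => φ h v)
      = ∑ i ∈ range (N g), ∑ p ∈ range (N (Δ₁ g i)),
          psiAuxTrilin ρ hrep z φ a b e (Δ₁ (Δ₁ g i) p) (Δ₂ (Δ₁ g i) p) (Δ₂ g i) := by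
  rw [psiAux_succ]
  refine sum_congr rfl fun i _ => ?_
  simp only [psiAuxTrilin_apply, Fin.cons_zero, Fin.cons_succ, hact_mul]
  rw [← psiAux_sum_fun]
  congr
  funext h v
  simp only [← HCochain.curryFirst_apply, map_sum, LinearMap.sum_apply,
    _root_.sum_apply]

theorem psiAux_face_zero (hrep : IsComulRep ℂ N Δ₁ Δ₂)
    (hρ_mul : ∀ g h : H, ρ (g * h) = ρ g ∘ₗ ρ h)
    (hact_mul : ∀ (h : H) (a b : A),
      ρ h (a * b) = ∑ i ∈ range (N h), ρ (Δ₁ h i) a * ρ (Δ₂ h i) b)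
    {k : ℕ} (g : H) (y : Fin (k+2) → A × H) (φ : HCochain H A (k+1)) :
    psiAux N Δ₁ Δ₂ ρ (k+2) g y (fun h v => φ h (faceTup 0 (v 0 * v 1) v))
      = ∑ r ∈ range (N (y 0).2), psiAux N Δ₁ Δ₂ ρ (k+1) g
          (faceTup 0 (cpPairTerm Δ₁ Δ₂ ρ (y 0) (y 1) r) y) (fun h v => φ h v) := by
  rw [psiAux_face_zero_eq_sum hrep hρ_mul]
  refine sum_congr rfl fun r _ => ?_
  rw [faceTup_zero, cpPairTerm, psiAux_cons_mul_eq_sum hrep hact_mul]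
  exact hrep.sum_coassoc _ g

theorem psiAux_face (hrep : IsComulRep ℂ N Δ₁ Δ₂)
    (hρ_mul : ∀ g h : H, ρ (g * h) = ρ g ∘ₗ ρ h)
    (hact_mul : ∀ (h : H) (a b : A),
      ρ h (a * b) = ∑ i ∈ range (N h), ρ (Δ₁ h i) a * ρ (Δ₂ h i) b)
    {k : ℕ} (j : Fin (k+1)) (g : H) (y : Fin (k+2) → A × H) (φ : HCochain H A (k+1)) :
    psiAux N Δ₁ Δ₂ ρ (k+2) g y (fun h v => φ h (faceTup j (v j.castSucc * v j.succ) v))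
      = ∑ m ∈ range (N (y j.castSucc).2), psiAux N Δ₁ Δ₂ ρ (k+1) g
          (faceTup j (cpPairTerm Δ₁ Δ₂ ρ (y j.castSucc) (y j.succ) m) y) (fun h v => φ h v) := by
  induction k generalizing g with
  | zero =>
    obtain rfl := Fin.fin_one_eq_zero j
    exact psiAux_face_zero hrep hρ_mul hact_mul g y φ
  | succ k ih =>
    cases j using Fin.cases with
    | zero => exact psiAux_face_zero hrep hρ_mul hact_mul g y φ
    | succ j =>
      simp only [psiAux_succ (k+2), faceTup_succ, Fin.cons_zero, Fin.tail_cons,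
        ← Fin.succ_castSucc, Fin.cons_succ]
      conv_rhs => enter [2, m]; rw [psiAux_succ]
      rw [sum_comm]
      refine sum_congr rfl fun i _ => ?_
      simp only [← HCochain.curryFirst_apply, Fin.cons_zero, Fin.cons_succ]
      exact ih j _ _ _

theorem psiV_face_zero {n : ℕ} (φ : HCochain H A (n+1)) (x : Fin (n+2) → A × H) :
    psiV N Δ₁ Δ₂ ρ (fun h a => φ h (faceTup 0 (a 0 * a 1) a)) x
      = ∑ m ∈ range (N (x 0).2),
          psiV N Δ₁ Δ₂ ρ (fun h a => φ h a) (faceTup 0 (cpPairTerm Δ₁ Δ₂ ρ (x 0) (x 1) m) x) := by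
  simp only [psiV, psiAux_succ, faceTup_zero, cpPairTerm, Fin.cons_zero, Fin.cons_one,
    Fin.cons_succ]
  rfl

theorem psiV_face_succ (hrep : IsComulRep ℂ N Δ₁ Δ₂)
    (hρ_mul : ∀ g h : H, ρ (g * h) = ρ g ∘ₗ ρ h)
    (hact_mul : ∀ (h : H) (a b : A),
      ρ h (a * b) = ∑ i ∈ range (N h), ρ (Δ₁ h i) a * ρ (Δ₂ h i) b)
    {k : ℕ} (φ : HCochain H A (k+2)) (j : Fin (k+1)) (x : Fin (k+3) → A × H) :
    psiV N Δ₁ Δ₂ ρ (fun h a => φ h (faceTup j.succ (a j.succ.castSucc * a j.succ.succ) a)) x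
      = ∑ m ∈ range (N (x j.succ.castSucc).2), psiV N Δ₁ Δ₂ ρ (fun h a => φ h a)
          (faceTup j.succ (cpPairTerm Δ₁ Δ₂ ρ (x j.succ.castSucc) (x j.succ.succ) m) x) := by
  simp only [psiV, faceTup_succ, Fin.cons_zero, Fin.tail_cons, ← Fin.succ_castSucc,
    Fin.cons_succ, ← HCochain.curryFirst_apply]
  exact psiAux_face hrep hρ_mul hact_mul j _ (Fin.tail x) _

end Psi

theorem statement9_general {n : ℕ}
    (N : H → ℕ) (Δ₁ Δ₂ : H → ℕ → H)
    (hrep : ∀ g : H, (Coalgebra.comul (R := ℂ) g : H ⊗[ℂ] H) =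
      ∑ i ∈ Finset.range (N g), Δ₁ g i ⊗ₜ[ℂ] Δ₂ g i)
    (ρ : H →ₗ[ℂ] A →ₗ[ℂ] A)
    (hρ_mul : ∀ g h : H, ρ (g * h) = ρ g ∘ₗ ρ h)
    (hact_mul : ∀ (h : H) (a b : A),
      ρ h (a * b) = ∑ i ∈ Finset.range (N h), ρ (Δ₁ h i) a * ρ (Δ₂ h i) b)
    (φ : H →ₗ[ℂ] MultilinearMap ℂ (fun _ : Fin (n+1) => A) ℂ) :
    ∀ (i : Fin (n+1)) (x : Fin (n+2) → A × H),
      psiV N Δ₁ Δ₂ ρ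
        (fun h a => φ h (faceTup i (a i.castSucc * a i.succ) a)) x
      = ∑ m ∈ Finset.range (N (x i.castSucc).2),
          psiV N Δ₁ Δ₂ ρ (fun h a => φ h a)
            (faceTup i (cpPairTerm Δ₁ Δ₂ ρ (x i.castSucc) (x i.succ) m) x) := by
  intro i x
  cases i using Fin.cases with
  | zero => exact psiV_face_zero φ x
  | succ j =>
    cases n with
    | zero => exact j.elim0
    | succ k => exact psiV_face_succ hrep hρ_mul hact_mul φ j x

/-- `Ψ` commutes with the first faces: for `0 ≤ i ≤ n`,
`Ψ(dⁱφ)(x⁰,…,xⁿ⁺¹) = Ψφ(x⁰,…,xⁱxⁱ⁺¹,…,xⁿ⁺¹)` on elementary tensors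
`xʲ = aʲ ⊗ hʲ`, where `dⁱφ(h,a⁰,…,aⁿ⁺¹) = φ(h, a⁰,…,aⁱaⁱ⁺¹,…,aⁿ⁺¹)` (the
right-hand side is expanded via the chosen representation of `Δ`). -/
theorem statement9 {n : ℕ}
    (N : H → ℕ) (Δ₁ Δ₂ : H → ℕ → H)
    (hrep : ∀ g : H, (Coalgebra.comul (R := ℂ) g : H ⊗[ℂ] H) =
      ∑ i ∈ Finset.range (N g), Δ₁ g i ⊗ₜ[ℂ] Δ₂ g i)
    (ρ : H →ₗ[ℂ] A →ₗ[ℂ] A)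
    (hρ_one : ρ 1 = LinearMap.id)
    (hρ_mul : ∀ g h : H, ρ (g * h) = ρ g ∘ₗ ρ h)
    (hact_mul : ∀ (h : H) (a b : A),
      ρ h (a * b) = ∑ i ∈ Finset.range (N h), ρ (Δ₁ h i) a * ρ (Δ₂ h i) b)
    (hact_one : ∀ h : H, ρ h 1 = (Coalgebra.counit (R := ℂ) h) • (1 : A))
    (φ : H →ₗ[ℂ] MultilinearMap ℂ (fun _ : Fin (n+1) => A) ℂ) :
    ∀ (i : Fin (n+1)) (x : Fin (n+2) → A × H),
      psiV N Δ₁ Δ₂ ρ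
        (fun h a => φ h (faceTup i (a i.castSucc * a i.succ) a)) x
      = ∑ m ∈ Finset.range (N (x i.castSucc).2),
          psiV N Δ₁ Δ₂ ρ (fun h a => φ h a)
            (faceTup i (cpPairTerm Δ₁ Δ₂ ρ (x i.castSucc) (x i.succ) m) x) :=
  statement9_general N Δ₁ Δ₂ hrep ρ hρ_mul hact_mul φ

end
end

section
/- Let f be an H-constant n-cochain on A ⋊ H (i.e., f and bf vanish whenever some argument in position ≥ 1 is in 1 ⊗ H). Then for all a⁰,…,aⁿ ∈ A, h⁰,…,hⁿ, h ∈ H: f(a⁰⊗h⁰h, a¹⊗h¹, a²⊗h², …, aⁿ⊗hⁿ) = f(a⁰⊗h⁰, h₍₁₎(a¹)⊗h₍₂₎h¹, a²⊗h², …, aⁿ⊗hⁿ). -/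
noncomputable section

open TensorProduct

variable {H A : Type} [Ring H] [HopfAlgebra ℂ H] [Ring A] [Algebra ℂ A]

lemma cpMul_apply' (N : H → ℕ) (Δ₁ Δ₂ : H → ℕ → H)
    (hrep : ∀ g : H, (Coalgebra.comul (R := ℂ) g : H ⊗[ℂ] H) =
      ∑ i ∈ Finset.range (N g), Δ₁ g i ⊗ₜ[ℂ] Δ₂ g i)
    (ρ : H →ₗ[ℂ] A →ₗ[ℂ] A) (a b : A) (g g' : H) :
    cpMul ρ ((a ⊗ₜ[ℂ] g) ⊗ₜ[ℂ] (b ⊗ₜ[ℂ] g')) =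
      ∑ i ∈ Finset.range (N g), (a * ρ (Δ₁ g i) b) ⊗ₜ[ℂ] (Δ₂ g i * g') := by
  simp only [cpMul, LinearMap.comp_apply, LinearEquiv.coe_coe, TensorProduct.assoc_tmul,
    LinearMap.lTensor_tmul, LinearMap.rTensor_tmul, hrep g, sum_tmul, tmul_sum, map_sum,
    TensorProduct.tensorTensorTensorComm_tmul, TensorProduct.map_tmul,
    TensorProduct.lift.tmul, LinearMap.mul'_apply, TensorProduct.assoc_symm_tmul]

lemma counit_collapse' (N : H → ℕ) (Δ₁ Δ₂ : H → ℕ → H)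
    (hrep : ∀ g : H, (Coalgebra.comul (R := ℂ) g : H ⊗[ℂ] H) =
      ∑ i ∈ Finset.range (N g), Δ₁ g i ⊗ₜ[ℂ] Δ₂ g i) (g : H) :
    ∑ i ∈ Finset.range (N g), (Coalgebra.counit (R := ℂ) (Δ₁ g i)) • Δ₂ g i = g := by
  have h1 := congrArg (fun z => (TensorProduct.lid ℂ H)
    (LinearMap.rTensor H (Coalgebra.counit (R := ℂ)) z)) (hrep g)
  simpa [Coalgebra.rTensor_counit_comul, map_sum] using h1.symm


/-- For an `H`-constant `n`-cochain `f` on `A ⋊ H`: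
`f(a⁰ ⊗ h⁰h, a¹ ⊗ h¹, …, aⁿ ⊗ hⁿ) = f(a⁰ ⊗ h⁰, h₍₁₎(a¹) ⊗ h₍₂₎h¹, a² ⊗ h², …, aⁿ ⊗ hⁿ)`. -/
theorem statement12 {n : ℕ} (hn : 0 < n)
    (N : H → ℕ) (Δ₁ Δ₂ : H → ℕ → H)
    (hrep : ∀ g : H, (Coalgebra.comul (R := ℂ) g : H ⊗[ℂ] H) =
      ∑ i ∈ Finset.range (N g), Δ₁ g i ⊗ₜ[ℂ] Δ₂ g i)
    (ρ : H →ₗ[ℂ] A →ₗ[ℂ] A)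
    (hρ_one : ρ 1 = LinearMap.id)
    (hρ_mul : ∀ g h : H, ρ (g * h) = ρ g ∘ₗ ρ h)
    (hact_mul : ∀ (h : H) (a b : A),
      ρ h (a * b) = ∑ i ∈ Finset.range (N h), ρ (Δ₁ h i) a * ρ (Δ₂ h i) b)
    (hact_one : ∀ h : H, ρ h 1 = (Coalgebra.counit (R := ℂ) h) • (1 : A))
    (f : MultilinearMap ℂ (fun _ : Fin (n+1) => A ⊗[ℂ] H) ℂ)
    (hf : IsHConstant ρ f) :
    ∀ (a : Fin (n+1) → A) (hs : Fin (n+1) → H) (h : H),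
      f (Function.update (fun j => a j ⊗ₜ[ℂ] hs j) 0 (a 0 ⊗ₜ[ℂ] (hs 0 * h)))
      = ∑ i ∈ Finset.range (N h),
          f (Function.update (fun j => a j ⊗ₜ[ℂ] hs j) 1
              (ρ (Δ₁ h i) (a 1) ⊗ₜ[ℂ] (Δ₂ h i * hs 1))) := by
  classical
  obtain ⟨hf1, hf2⟩ := hf
  intro a hs h
  have h1v : ((1 : Fin (n+1)) : ℕ) = 1 := by rw [Fin.val_one']; exact Nat.mod_eq_of_lt (by omega)
  have h1v' : ((1 : Fin (n+2)) : ℕ) = 1 := by rw [Fin.val_one']; exact Nat.mod_eq_of_lt (by omega)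
  set x : Fin (n+2) → A ⊗[ℂ] H := fun k =>
    if (k : ℕ) = 0 then a 0 ⊗ₜ[ℂ] hs 0
    else if (k : ℕ) = 1 then (1 : A) ⊗ₜ[ℂ] h
    else a ⟨(k : ℕ) - 1, by have := k.isLt; omega⟩ ⊗ₜ[ℂ]
         hs ⟨(k : ℕ) - 1, by have := k.isLt; omega⟩ with hxdef
  have hx0 : ∀ k : Fin (n+2), (k : ℕ) = 0 → x k = a 0 ⊗ₜ[ℂ] hs 0 := by
    intro k hk; simp only [hxdef]; rw [if_pos hk]
  have hx1 : ∀ k : Fin (n+2), (k : ℕ) = 1 → x k = (1 : A) ⊗ₜ[ℂ] h := by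
    intro k hk; simp only [hxdef]; rw [if_neg (by omega), if_pos hk]
  have hxge : ∀ k : Fin (n+2), 2 ≤ (k : ℕ) →
      x k = a ⟨(k : ℕ) - 1, by have := k.isLt; omega⟩ ⊗ₜ[ℂ]
            hs ⟨(k : ℕ) - 1, by have := k.isLt; omega⟩ := by
    intro k hk; simp only [hxdef]
    rw [if_neg (by omega), if_neg (by omega)]
  -- coboundary vanishes on x
  have hb := hf2 x ⟨1, by rw [h1v']; omega, h, hx1 1 h1v'⟩
  rw [cpb] at hb
  -- cyclic term vanishes
  have hcyc : f (fun k => if (k : ℕ) = 0 then cpMul ρ (x (Fin.last (n+1)) ⊗ₜ[ℂ] x 0)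
      else x k.castSucc) = 0 := by
    apply hf1
    refine ⟨1, by rw [h1v]; omega, h, ?_⟩
    rw [if_neg (by rw [h1v]; omega)]
    exact hx1 _ (by rw [Fin.coe_castSucc, h1v])
  -- terms with j ≥ 2 vanish
  have hvan : ∀ j : Fin (n+1), j ∉ ({0, 1} : Finset (Fin (n+1))) →
      (-1 : ℂ) ^ (j : ℕ) * f (faceTup j (cpMul ρ (x j.castSucc ⊗ₜ[ℂ] x j.succ)) x) = 0 := by
    intro j hj
    have hj2 : 2 ≤ (j : ℕ) := by
      simp only [Finset.mem_insert, Finset.mem_singleton] at hj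
      push_neg at hj
      obtain ⟨hj0, hj1⟩ := hj
      have e0 : (j : ℕ) ≠ 0 := fun e => hj0 (Fin.ext (by simpa using e))
      have e1 : (j : ℕ) ≠ 1 := fun e => hj1 (Fin.ext (by rw [h1v]; exact e))
      omega
    have hlt : ((1 : Fin (n+1)) : ℕ) < (j : ℕ) := by rw [h1v]; omega
    refine mul_eq_zero_of_right _ (hf1 _ ⟨1, by rw [h1v]; omega, h, ?_⟩)
    rw [faceTup]
    rw [if_pos hlt]
    exact hx1 _ (by rw [Fin.coe_castSucc, h1v])
  have h01 : (0 : Fin (n+1)) ≠ 1 := by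
    intro e
    have := congrArg Fin.val e
    rw [h1v] at this
    simp at this
  -- reduce the sum to j = 0, 1
  have hsum : (∑ j : Fin (n+1), (-1 : ℂ) ^ (j : ℕ) *
      f (faceTup j (cpMul ρ (x j.castSucc ⊗ₜ[ℂ] x j.succ)) x))
      = f (faceTup 0 (cpMul ρ (x (0 : Fin (n+1)).castSucc ⊗ₜ[ℂ] x (0 : Fin (n+1)).succ)) x)
        - f (faceTup 1 (cpMul ρ (x (1 : Fin (n+1)).castSucc ⊗ₜ[ℂ] x (1 : Fin (n+1)).succ)) x) := by
    rw [← Finset.sum_subset (Finset.subset_univ ({0, 1} : Finset (Fin (n+1))))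
      (fun j _ hj => hvan j hj)]
    rw [Finset.sum_pair h01, Fin.val_zero, pow_zero, one_mul, h1v, pow_one, neg_one_mul]
    ring
  -- compute the j = 0 face
  have hmul0 : cpMul ρ (x (0 : Fin (n+1)).castSucc ⊗ₜ[ℂ] x (0 : Fin (n+1)).succ)
      = a 0 ⊗ₜ[ℂ] (hs 0 * h) := by
    rw [hx0 _ (by simp), hx1 _ (by simp [Fin.val_succ]), cpMul_apply' N Δ₁ Δ₂ hrep]
    have hterm : ∀ i, (a 0 * ρ (Δ₁ (hs 0) i) 1) ⊗ₜ[ℂ] (Δ₂ (hs 0) i * h)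
        = a 0 ⊗ₜ[ℂ] (((Coalgebra.counit (R := ℂ) (Δ₁ (hs 0) i)) • Δ₂ (hs 0) i) * h) := by
      intro i
      rw [hact_one, mul_smul_comm, mul_one, smul_mul_assoc, tmul_smul, smul_tmul']
    simp_rw [hterm]
    rw [← tmul_sum, ← Finset.sum_mul, counit_collapse' N Δ₁ Δ₂ hrep]
  have hface0 : faceTup (0 : Fin (n+1)) (a 0 ⊗ₜ[ℂ] (hs 0 * h)) x
      = Function.update (fun j => a j ⊗ₜ[ℂ] hs j) 0 (a 0 ⊗ₜ[ℂ] (hs 0 * h)) := by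
    funext k
    rw [faceTup]
    by_cases hk : k = 0
    · subst hk; simp
    · have hkv : 0 < (k : ℕ) := Fin.pos_iff_ne_zero.mpr hk
      rw [if_neg (by rw [Fin.val_zero]; omega), if_neg hk, Function.update_of_ne hk]
      rw [hxge _ (by rw [Fin.val_succ]; omega)]
      have he : (⟨((k.succ : Fin (n+2)) : ℕ) - 1,
          by have := k.isLt; rw [Fin.val_succ]; omega⟩ : Fin (n+1)) = k := by
        simp [Fin.val_succ]
      rw [he]
  -- compute the j = 1 face
  have hmul1 : cpMul ρ (x (1 : Fin (n+1)).castSucc ⊗ₜ[ℂ] x (1 : Fin (n+1)).succ)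
      = ∑ i ∈ Finset.range (N h), (ρ (Δ₁ h i) (a 1)) ⊗ₜ[ℂ] (Δ₂ h i * hs 1) := by
    rw [hx1 _ (by rw [Fin.coe_castSucc, h1v]),
      hxge _ (by rw [Fin.val_succ, h1v])]
    rw [cpMul_apply' N Δ₁ Δ₂ hrep]
    have he : (⟨(((1 : Fin (n+1)).succ : Fin (n+2)) : ℕ) - 1,
        by rw [Fin.val_succ, h1v]; omega⟩ : Fin (n+1)) = 1 := by
      apply Fin.ext
      show (((1 : Fin (n+1)).succ : Fin (n+2)) : ℕ) - 1 = _
      rw [Fin.val_succ]; omega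
    rw [he]
    simp_rw [one_mul]
  have hface1 : ∀ y, faceTup (1 : Fin (n+1)) y x
      = Function.update (fun j => a j ⊗ₜ[ℂ] hs j) 1 y := by
    intro y
    funext k
    rw [faceTup]
    by_cases hk0 : k = 0
    · subst hk0
      rw [if_pos (by rw [h1v, Fin.val_zero]; omega), Function.update_of_ne h01]
      rw [hx0 _ (by simp)]
    · by_cases hk1 : k = 1
      · subst hk1
        rw [if_neg (by omega), if_pos rfl, Function.update_self]
      · have hkv : 0 < (k : ℕ) := Fin.pos_iff_ne_zero.mpr hk0
        have hkv1 : (k : ℕ) ≠ 1 := fun e => hk1 (Fin.ext (by rw [h1v]; exact e))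
        rw [if_neg (by rw [h1v]; omega), if_neg hk1, Function.update_of_ne hk1]
        rw [hxge _ (by rw [Fin.val_succ]; omega)]
        have he : (⟨((k.succ : Fin (n+2)) : ℕ) - 1,
            by have := k.isLt; rw [Fin.val_succ]; omega⟩ : Fin (n+1)) = k := by
          simp [Fin.val_succ]
        rw [he]
  rw [hsum, hcyc, mul_zero, add_zero, hmul0, hface0, hmul1, hface1] at hb
  rw [MultilinearMap.map_update_sum] at hb
  exact sub_eq_zero.mp hb

end
end

section
/- With Ψ and Φ as defined, Φ ∘ Ψ = id on normalized equivariant n-cochains: for any equivariant φ, Φ(Ψφ)(h, a⁰,…,aⁿ) = φ(h, a⁰,…,aⁿ). -/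
noncomputable section

open TensorProduct

variable {H A : Type} [Ring H] [HopfAlgebra ℂ H] [Ring A] [Algebra ℂ A]

/-! With `h⁰ = ⋯ = hⁿ⁻¹ = 1`, every coproduct that `Ψ` takes is a coproduct of `1`, and
`Δ(1) = 1 ⊗ 1`, `1(a) = a`, so `Ψφ(a⁰ ⊗ 1, …, aⁿ⁻¹ ⊗ 1, aⁿ ⊗ h)` collapses to `φ(h, a⁰, …, aⁿ)`.
Since `Ψ` is computed from an arbitrary finite representation of `Δ`, the collapse is carried
out on the representation-free Sweedler sum `sweedlerLin`, which agrees with `sweedler` on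
multilinear integrands. -/

section SweedlerLin

variable {R C M : Type*} [CommSemiring R] [AddCommMonoid M] [Module R M]

def sweedlerLin [AddCommMonoid C] [Module R C] [Coalgebra R C] :
    (k : ℕ) → MultilinearMap R (fun _ : Fin (k+1) => C) M →ₗ[R] C →ₗ[R] M
  | 0 => (MultilinearMap.ofSubsingletonₗ R R (ι := Fin 1) C M 0).symm.toLinearMap
  | k+1 => LinearMap.lcomp R M (Coalgebra.comul (R := R)) ∘ₗ
      TensorProduct.uncurry (RingHom.id R) C C M ∘ₗ
      LinearMap.llcomp R C _ _ (sweedlerLin k) ∘ₗ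
      (multilinearCurryLeftEquiv R (fun _ : Fin (k+2) => C) M).toLinearMap

theorem sweedlerLin_succ_apply [AddCommMonoid C] [Module R C] [Coalgebra R C] (k : ℕ)
    (f : MultilinearMap R (fun _ : Fin (k+2) => C) M) (g : C) :
    sweedlerLin (k+1) f g =
      TensorProduct.lift (sweedlerLin k ∘ₗ f.curryLeft) (Coalgebra.comul (R := R) g) :=
  rfl

theorem sweedlerLin_one [Semiring C] [Bialgebra R C] (k : ℕ)
    (f : MultilinearMap R (fun _ : Fin (k+1) => C) M) : sweedlerLin k f 1 = f 1 := by
  induction k with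
  | zero => rfl
  | succ k ih =>
    rw [sweedlerLin_succ_apply, Bialgebra.comul_one, Algebra.TensorProduct.one_def,
      TensorProduct.lift.tmul, LinearMap.comp_apply, ih, MultilinearMap.curryLeft_apply]
    exact congrArg f (Fin.cons_self_tail 1)

end SweedlerLin

section FlipMultilinear

variable {R ι N M₂ : Type*} {M₁ : ι → Type*} [CommSemiring R] [DecidableEq ι]
  [∀ i, AddCommMonoid (M₁ i)] [∀ i, Module R (M₁ i)] [AddCommMonoid N] [Module R N]
  [AddCommMonoid M₂] [Module R M₂]

def LinearMap.flipMultilinear (f : N →ₗ[R] MultilinearMap R M₁ M₂) :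
    MultilinearMap R M₁ (N →ₗ[R] M₂) :=
  MultilinearMap.mk' (fun v => { toFun u := f u v, map_add' := by simp, map_smul' := by simp })
    (fun _ _ _ _ => by ext; simp) (fun _ _ _ _ => by ext; simp)

@[simp]
theorem LinearMap.flipMultilinear_apply_apply (f : N →ₗ[R] MultilinearMap R M₁ M₂)
    (v : ∀ i, M₁ i) (u : N) : f.flipMultilinear v u = f u v :=
  rfl

end FlipMultilinear

section Sweedler

variable {N : H → ℕ} {Δ₁ Δ₂ : H → ℕ → H}

theorem sweedler_eq_sweedlerLin
    (hrep : ∀ g : H, (Coalgebra.comul (R := ℂ) g : H ⊗[ℂ] H) =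
      ∑ i ∈ Finset.range (N g), Δ₁ g i ⊗ₜ[ℂ] Δ₂ g i)
    (k : ℕ) (g : H) (f : MultilinearMap ℂ (fun _ : Fin (k+1) => H) ℂ) :
    sweedler N Δ₁ Δ₂ k g f = sweedlerLin k f g := by
  induction k generalizing g with
  | zero => exact congrArg f (funext fun i => by fin_cases i; rfl)
  | succ k ih =>
    rw [sweedlerLin_succ_apply, hrep, map_sum]
    exact Finset.sum_congr rfl fun i _ => ih (Δ₂ g i) (f.curryLeft (Δ₁ g i))

theorem sweedler_one
    (hrep : ∀ g : H, (Coalgebra.comul (R := ℂ) g : H ⊗[ℂ] H) =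
      ∑ i ∈ Finset.range (N g), Δ₁ g i ⊗ₜ[ℂ] Δ₂ g i)
    (k : ℕ) (f : MultilinearMap ℂ (fun _ : Fin (k+1) => H) ℂ) :
    sweedler N Δ₁ Δ₂ k 1 f = f 1 := by
  rw [sweedler_eq_sweedlerLin hrep, sweedlerLin_one]

theorem psiAux_eq_sweedler (ρ : H →ₗ[ℂ] A →ₗ[ℂ] A) (k : ℕ) (g : H) (x : Fin (k+1) → A × H)
    (F : H → (Fin (k+1) → A) → ℂ) (hx : ∀ j : Fin k, (x j.castSucc).2 = 1) :
    psiAux N Δ₁ Δ₂ ρ (k+1) g x F =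
      sweedler N Δ₁ Δ₂ (k+1) g
        (fun ℓ => F (ℓ (Fin.last (k+1)) * (x (Fin.last k)).2)
          (fun j => ρ (ℓ j.castSucc) (x j).1)) := by
  induction k generalizing g with
  | zero =>
    exact Finset.sum_congr rfl fun i _ => congrArg (F _) (funext fun j => by fin_cases j; rfl)
  | succ k ih =>
    refine Finset.sum_congr rfl fun i _ => ?_
    rw [show (x 0).2 = 1 from hx 0, mul_one, ih _ _ _ fun j => hx j.succ]
    congr 1
    funext ℓ
    congr 1
    funext j
    cases j using Fin.cases <;> simp

end Sweedler

theorem statement16_general {n : ℕ}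
    (N : H → ℕ) (Δ₁ Δ₂ : H → ℕ → H)
    (hrep : ∀ g : H, (Coalgebra.comul (R := ℂ) g : H ⊗[ℂ] H) =
      ∑ i ∈ Finset.range (N g), Δ₁ g i ⊗ₜ[ℂ] Δ₂ g i)
    (ρ : H →ₗ[ℂ] A →ₗ[ℂ] A)
    (hρ_one : ρ 1 = LinearMap.id)
    (φ : H →ₗ[ℂ] MultilinearMap ℂ (fun _ : Fin (n+1) => A) ℂ) :
    ∀ (h : H) (a : Fin (n+1) → A),
      psiV N Δ₁ Δ₂ ρ (fun h' a' => φ h' a')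
        (fun i => (a i, if i = Fin.last n then h else 1)) = φ h a := by
  intro h a
  cases n with
  | zero => exact congrArg (φ h) (funext fun j => by fin_cases j; rfl)
  | succ m =>
    -- `M ℓ = φ (ℓₘ₊₁ h, a⁰, ℓ₀(a¹), …, ℓₘ(aᵐ⁺¹))`
    let M : MultilinearMap ℂ (fun _ : Fin (m+2) => H) ℂ :=
      (((φ ∘ₗ LinearMap.mulRight ℂ h).flipMultilinear.curryLeft (a 0)).compLinearMap
        fun j => ρ.flip (a j.succ)).uncurryRight
    have hne : ∀ j : Fin m, j.castSucc.succ ≠ Fin.last (m+1) := fun j =>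
      Fin.succ_castSucc j ▸ (Fin.castSucc_lt_last _).ne
    calc _ = sweedler N Δ₁ Δ₂ (m+1) 1 M := by
          rw [psiV, if_neg Fin.last_pos.ne,
            psiAux_eq_sweedler _ _ _ _ _ fun j => if_neg (hne j)]
          simp only [Fin.succ_last, if_true]
          rfl
      _ = M 1 := sweedler_one hrep _ M
      _ = φ h a := by
          simp only [M, MultilinearMap.uncurryRight_apply, MultilinearMap.compLinearMap_apply,
            MultilinearMap.curryLeft_apply, LinearMap.flipMultilinear_apply_apply, Fin.init,
            Pi.one_apply, LinearMap.flip_apply, hρ_one, LinearMap.comp_apply,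
            LinearMap.mulRight_apply, one_mul, LinearMap.id_apply]
          exact congrArg (φ h) (Fin.cons_self_tail a)

/-- `Φ ∘ Ψ = id` on normalized equivariant cochains:
`Φ(Ψφ)(h, a⁰,…,aⁿ) = Ψφ(a⁰ ⊗ 1, …, aⁿ⁻¹ ⊗ 1, aⁿ ⊗ h) = φ(h, a⁰,…,aⁿ)`. -/
theorem statement16 {n : ℕ}
    (N : H → ℕ) (Δ₁ Δ₂ : H → ℕ → H)
    (hrep : ∀ g : H, (Coalgebra.comul (R := ℂ) g : H ⊗[ℂ] H) =
      ∑ i ∈ Finset.range (N g), Δ₁ g i ⊗ₜ[ℂ] Δ₂ g i)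
    (ρ : H →ₗ[ℂ] A →ₗ[ℂ] A)
    (hρ_one : ρ 1 = LinearMap.id)
    (hρ_mul : ∀ g h : H, ρ (g * h) = ρ g ∘ₗ ρ h)
    (hact_mul : ∀ (h : H) (a b : A),
      ρ h (a * b) = ∑ i ∈ Finset.range (N h), ρ (Δ₁ h i) a * ρ (Δ₂ h i) b)
    (hact_one : ∀ h : H, ρ h 1 = (Coalgebra.counit (R := ℂ) h) • (1 : A))
    (φ : H →ₗ[ℂ] MultilinearMap ℂ (fun _ : Fin (n+1) => A) ℂ)
    (hequiv : IsEquivariant N Δ₁ Δ₂ ρ (fun h a => φ h a))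
    (hnorm : ∀ (h : H) (a : Fin (n+1) → A), (∃ j, a j = 1) → φ h a = 0) :
    ∀ (h : H) (a : Fin (n+1) → A),
      psiV N Δ₁ Δ₂ ρ (fun h' a' => φ h' a')
        (fun i => (a i, if i = Fin.last n then h else 1)) = φ h a :=
  statement16_general N Δ₁ Δ₂ hrep ρ hρ_one φ

end
end

section
/- With Ψ and Φ as defined, Ψ ∘ Φ = id on H-constant n-cochains on A ⋊ H: for any H-constant f, Ψ(Φf)(a⁰⊗h⁰,…,aⁿ⊗hⁿ) = f(a⁰⊗h⁰,…,aⁿ⊗hⁿ). -/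
noncomputable section

open TensorProduct

variable {H A : Type} [Ring H] [HopfAlgebra ℂ H] [Ring A] [Algebra ℂ A]

/-!
By `H`-constancy, `b f` vanishes at a tuple with `1 ⊗ g` inserted between `x` and `y`, and of
its faces only the two absorbing `1 ⊗ g` survive; this is the sliding identity
`f(…, x(1 ⊗ g), y, …) = f(…, x, (1 ⊗ g)y, …)`. As `(1 ⊗ g)(a ⊗ h) = Σ g₍₁₎(a) ⊗ g₍₂₎h` and
`(c ⊗ 1)(1 ⊗ g) = c ⊗ g`, each step of the recursion defining `Ψ` is one such slide read
backwards, so by induction on the number of slots `Ψ(Φf)` reassembles `f(a⁰ ⊗ h⁰, …, aⁿ ⊗ hⁿ)`.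
-/

open Function

lemma cpMul_tmul {ι : Type*} (ρ : H →ₗ[ℂ] A →ₗ[ℂ] A) {h : H} (s : Finset ι) (u v : ι → H)
    (hh : Coalgebra.comul (R := ℂ) h = ∑ i ∈ s, u i ⊗ₜ[ℂ] v i) (a b : A) (g : H) :
    cpMul ρ ((a ⊗ₜ[ℂ] h) ⊗ₜ[ℂ] (b ⊗ₜ[ℂ] g)) = ∑ i ∈ s, (a * ρ (u i) b) ⊗ₜ[ℂ] (v i * g) := by
  simp [cpMul, hh, sum_tmul, tmul_sum, tensorTensorTensorComm_tmul]

lemma cpMul_tmul_one_one_tmul (ρ : H →ₗ[ℂ] A →ₗ[ℂ] A) (hρ_one : ρ 1 = LinearMap.id)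
    (a : A) (g : H) : cpMul ρ ((a ⊗ₜ[ℂ] (1 : H)) ⊗ₜ[ℂ] ((1 : A) ⊗ₜ[ℂ] g)) = a ⊗ₜ[ℂ] g := by
  rw [cpMul_tmul ρ {()} (fun _ => 1) (fun _ => 1) (by simp [Algebra.TensorProduct.one_def])]
  simp [hρ_one]

section Faces

variable {α : Type} {n : ℕ}

lemma faceTup_eq_update {j : Fin (n+1)} {y : α} {x : Fin (n+2) → α} {X : Fin (n+1) → α}
    (hlt : ∀ k < j, x k.castSucc = X k) (hgt : ∀ k, j < k → x k.succ = X k) :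
    faceTup j y x = update X j y := by
  funext k
  rcases lt_trichotomy k j with hk | rfl | hk
  · simp [faceTup, Fin.lt_def.mp hk, hk.ne, hlt k hk]
  · simp [faceTup]
  · simp [faceTup, not_lt.mpr (Fin.le_def.mp hk.le), hk.ne', hgt k hk]

lemma faceTup_insertNth_succ (j : Fin (n+1)) (y w : α) (X : Fin (n+1) → α) :
    faceTup j y (Fin.insertNth j.succ w X) = update X j y := by
  refine faceTup_eq_update (fun k hk => ?_) (fun k hk => ?_)
  · rw [← Fin.succAbove_of_castSucc_lt _ _ (Fin.castSucc_lt_succ_iff.mpr hk.le),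
      Fin.insertNth_apply_succAbove]
  · rw [← Fin.succAbove_of_lt_succ _ _ (Fin.succ_lt_succ_iff.mpr hk), Fin.insertNth_apply_succAbove]

lemma faceTup_insertNth_castSucc (j : Fin (n+1)) (y w : α) (X : Fin (n+1) → α) :
    faceTup j y (Fin.insertNth j.castSucc w X) = update X j y := by
  refine faceTup_eq_update (fun k hk => ?_) (fun k hk => ?_)
  · rw [← Fin.succAbove_of_castSucc_lt _ _ (Fin.castSucc_lt_castSucc_iff.mpr hk),
      Fin.insertNth_apply_succAbove]
  · rw [← Fin.succAbove_of_le_castSucc _ _ (Fin.castSucc_le_castSucc_iff.mpr hk.le),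
      Fin.insertNth_apply_succAbove]

lemma exists_pos_faceTup_eq {j : Fin (n+1)} (y : α) (x : Fin (n+2) → α) {i : Fin (n+2)}
    (hi : 0 < i) (hcs : j.castSucc ≠ i) (hs : j.succ ≠ i) :
    ∃ k : Fin (n+1), 0 < (k : ℕ) ∧ faceTup j y x k = x i := by
  have hi : 0 < (i : ℕ) := hi
  have hcs : j.val ≠ i.val := fun h => hcs (Fin.ext h)
  have hs : j.val + 1 ≠ i.val := fun h => hs (Fin.ext h)
  rcases lt_or_gt_of_ne hs with h | h
  · refine ⟨⟨i - 1, by omega⟩, by simp; omega, ?_⟩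
    rw [faceTup, if_neg (by simp; omega), if_neg (fun e => by simp [Fin.ext_iff] at e; omega)]
    exact congrArg x (Fin.ext (by simp; omega))
  · refine ⟨⟨i, by omega⟩, hi, ?_⟩
    rw [faceTup, if_pos (by simp; omega)]
    rfl

end Faces

def Slides (ρ : H →ₗ[ℂ] A →ₗ[ℂ] A) {m : ℕ} (f : (Fin (m+1) → A ⊗[ℂ] H) → ℂ) : Prop :=
  ∀ (p : Fin m) (X : Fin (m+1) → A ⊗[ℂ] H) (g : H),
    f (update X p.castSucc (cpMul ρ (X p.castSucc ⊗ₜ[ℂ] ((1 : A) ⊗ₜ[ℂ] g)))) =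
      f (update X p.succ (cpMul ρ (((1 : A) ⊗ₜ[ℂ] g) ⊗ₜ[ℂ] X p.succ)))

theorem IsHConstant.slides {ρ : H →ₗ[ℂ] A →ₗ[ℂ] A} {n : ℕ}
    {f : MultilinearMap ℂ (fun _ : Fin (n+1) => A ⊗[ℂ] H) ℂ} (hf : IsHConstant ρ f) :
    Slides ρ ⇑f := by
  intro p X g
  set w : A ⊗[ℂ] H := (1 : A) ⊗ₜ[ℂ] g
  set z : Fin (n+2) → A ⊗[ℂ] H := Fin.insertNth p.castSucc.succ w X
  have hzw : z p.castSucc.succ = w := Fin.insertNth_apply_same _ _ _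
  have hzX : ∀ k, z (p.castSucc.succ.succAbove k) = X k :=
    Fin.insertNth_apply_succAbove (α := fun _ => A ⊗[ℂ] H) _ w X
  have hzX_left : z p.castSucc.castSucc = X p.castSucc := by simpa using hzX p.castSucc
  have hzX_right : z p.succ.succ = X p.succ := by simpa using hzX p.succ
  have hface_left : faceTup p.castSucc (cpMul ρ (z p.castSucc.castSucc ⊗ₜ[ℂ] z p.castSucc.succ)) z
      = update X p.castSucc (cpMul ρ (X p.castSucc ⊗ₜ[ℂ] w)) := by
    rw [hzX_left, hzw, faceTup_insertNth_succ]
  have hface_right : faceTup p.succ (cpMul ρ (z p.succ.castSucc ⊗ₜ[ℂ] z p.succ.succ)) z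
      = update X p.succ (cpMul ρ (w ⊗ₜ[ℂ] X p.succ)) := by
    rw [← Fin.succ_castSucc, hzw, hzX_right]
    simp only [z, Fin.succ_castSucc, faceTup_insertNth_castSucc]
  have hwrap : f (fun k => if (k : ℕ) = 0 then cpMul ρ (z (Fin.last (n+1)) ⊗ₜ[ℂ] z 0)
      else z k.castSucc) = 0 :=
    hf.1 _ ⟨p.succ, Fin.succ_pos p, g, by simpa using hzw⟩
  have hother : ∀ j : Fin (n+1), j ≠ p.castSucc ∧ j ≠ p.succ →
      (-1 : ℂ) ^ (j : ℕ) * f (faceTup j (cpMul ρ (z j.castSucc ⊗ₜ[ℂ] z j.succ)) z) = 0 := by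
    rintro j ⟨hj₁, hj₂⟩
    obtain ⟨k, hk, hzk⟩ := exists_pos_faceTup_eq (cpMul ρ (z j.castSucc ⊗ₜ[ℂ] z j.succ)) z
      (i := p.castSucc.succ) (Fin.succ_pos _)
      (by rwa [Fin.succ_castSucc, ne_eq, Fin.castSucc_inj]) (by rwa [ne_eq, Fin.succ_inj])
    rw [hf.1 _ ⟨k, hk, g, hzk.trans hzw⟩, mul_zero]
  have hb : cpb ρ ⇑f z = 0 := hf.2 z ⟨p.castSucc.succ, Fin.succ_pos _, g, hzw⟩
  rw [cpb, hwrap, mul_zero, add_zero,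
    Fintype.sum_eq_add _ _ (Fin.castSucc_lt_succ (i := p)).ne hother, hface_left, hface_right,
    Fin.val_castSucc, Fin.val_succ, pow_succ] at hb
  have hdiff := (mul_eq_zero.mp (by linear_combination hb : (-1 : ℂ) ^ (p : ℕ) *
    (f (update X p.castSucc (cpMul ρ (X p.castSucc ⊗ₜ[ℂ] w))) -
      f (update X p.succ (cpMul ρ (w ⊗ₜ[ℂ] X p.succ)))) = 0)).resolve_left (by simp)
  exact sub_eq_zero.mp hdiff

section Slides

variable {ρ : H →ₗ[ℂ] A →ₗ[ℂ] A} {m : ℕ}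

theorem Slides.curryLeft {f : MultilinearMap ℂ (fun _ : Fin (m+2) => A ⊗[ℂ] H) ℂ}
    (hf : Slides ρ ⇑f) (x : A ⊗[ℂ] H) : Slides ρ ⇑(f.curryLeft x) := by
  intro p X g
  have := hf p.succ (Fin.cons x X) g
  rwa [← Fin.succ_castSucc, Fin.cons_succ, Fin.cons_succ, ← Fin.cons_update,
    ← Fin.cons_update] at this

theorem Slides.apply_cons_cons {f : (Fin (m+2) → A ⊗[ℂ] H) → ℂ} (hf : Slides ρ f)
    (x y : A ⊗[ℂ] H) (r : Fin m → A ⊗[ℂ] H) (g : H) :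
    f (Fin.cons (cpMul ρ (x ⊗ₜ[ℂ] ((1 : A) ⊗ₜ[ℂ] g))) (Fin.cons y r)) =
      f (Fin.cons x (Fin.cons (cpMul ρ (((1 : A) ⊗ₜ[ℂ] g) ⊗ₜ[ℂ] y)) r)) := by
  have := hf 0 (Fin.cons x (Fin.cons y r)) g
  rwa [Fin.castSucc_zero, Fin.cons_zero, Fin.update_cons_zero, Fin.cons_succ, Fin.cons_zero,
    ← Fin.cons_update, Fin.update_cons_zero] at this

end Slides

lemma phiV_cons {k : ℕ} (f : MultilinearMap ℂ (fun _ : Fin (k+2) => A ⊗[ℂ] H) ℂ) (h : H) (c : A)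
    (v : Fin (k+1) → A) :
    phiV f h (Fin.cons c v) = phiV (f.curryLeft (c ⊗ₜ[ℂ] (1 : H))) h v := by
  simp only [phiV, MultilinearMap.curryLeft_apply]
  congr 1
  funext i
  refine Fin.cases ?_ (fun j => ?_) i
  · simp
  · simp [← Fin.succ_last]

theorem psiAux_phiV_cons (N : H → ℕ) (Δ₁ Δ₂ : H → ℕ → H)
    (hrep : ∀ g : H, (Coalgebra.comul (R := ℂ) g : H ⊗[ℂ] H) =
      ∑ i ∈ Finset.range (N g), Δ₁ g i ⊗ₜ[ℂ] Δ₂ g i)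
    (ρ : H →ₗ[ℂ] A →ₗ[ℂ] A) (hρ_one : ρ 1 = LinearMap.id) :
    ∀ {k : ℕ} (f : MultilinearMap ℂ (fun _ : Fin (k+1) => A ⊗[ℂ] H) ℂ), Slides ρ ⇑f →
      ∀ (g : H) (c : A) (x : Fin k → A × H),
        psiAux N Δ₁ Δ₂ ρ k g x (fun h v => phiV f h (Fin.cons c v)) =
          f (Fin.cons (c ⊗ₜ[ℂ] g) (fun j => (x j).1 ⊗ₜ[ℂ] (x j).2))
  | 0, f, _, g, c, x => by
    simp only [psiAux, phiV]
    congr 1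
    funext i
    fin_cases i
    simp
  | k+1, f, hf, g, c, x => by
    simp only [psiAux, phiV_cons,
      psiAux_phiV_cons N Δ₁ Δ₂ hrep ρ hρ_one _ (hf.curryLeft _)]
    calc _ = f.curryLeft (c ⊗ₜ[ℂ] 1)
          (Fin.cons (cpMul ρ (((1 : A) ⊗ₜ[ℂ] g) ⊗ₜ[ℂ] ((x 0).1 ⊗ₜ[ℂ] (x 0).2)))
            fun j => (x j.succ).1 ⊗ₜ[ℂ] (x j.succ).2) := by
          rw [cpMul_tmul ρ _ _ _ (hrep g)]
          simp only [one_mul, ← MultilinearMap.curryLeft_apply, map_sum, FunLike.coe_sum,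
            Finset.sum_apply]
      _ = f (Fin.cons (cpMul ρ ((c ⊗ₜ[ℂ] 1) ⊗ₜ[ℂ] ((1 : A) ⊗ₜ[ℂ] g)))
            (Fin.cons ((x 0).1 ⊗ₜ[ℂ] (x 0).2) fun j => (x j.succ).1 ⊗ₜ[ℂ] (x j.succ).2)) :=
          (hf.apply_cons_cons _ _ _ g).symm
      _ = _ := by
          rw [cpMul_tmul_one_one_tmul ρ hρ_one]
          exact congrArg (fun y => f (Fin.cons _ y))
            (Fin.cons_self_tail fun j => (x j).1 ⊗ₜ[ℂ] (x j).2)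

theorem statement17_general {n : ℕ}
    (N : H → ℕ) (Δ₁ Δ₂ : H → ℕ → H)
    (hrep : ∀ g : H, (Coalgebra.comul (R := ℂ) g : H ⊗[ℂ] H) =
      ∑ i ∈ Finset.range (N g), Δ₁ g i ⊗ₜ[ℂ] Δ₂ g i)
    (ρ : H →ₗ[ℂ] A →ₗ[ℂ] A)
    (hρ_one : ρ 1 = LinearMap.id)
    (f : MultilinearMap ℂ (fun _ : Fin (n+1) => A ⊗[ℂ] H) ℂ)
    (hf : IsHConstant ρ f) :
    ∀ (a : Fin (n+1) → A) (hs : Fin (n+1) → H),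
      psiV N Δ₁ Δ₂ ρ (phiV f) (fun i => (a i, hs i))
        = f (fun i => a i ⊗ₜ[ℂ] hs i) := by
  intro a hs
  rw [psiV, psiAux_phiV_cons N Δ₁ Δ₂ hrep ρ hρ_one f hf.slides]
  exact congrArg f (Fin.cons_self_tail fun i => a i ⊗ₜ[ℂ] hs i)

/-- `Ψ ∘ Φ = id` on `H`-constant cochains on `A ⋊ H`:
`Ψ(Φf)(a⁰ ⊗ h⁰, …, aⁿ ⊗ hⁿ) = f(a⁰ ⊗ h⁰, …, aⁿ ⊗ hⁿ)`. -/
theorem statement17 {n : ℕ}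
    (N : H → ℕ) (Δ₁ Δ₂ : H → ℕ → H)
    (hrep : ∀ g : H, (Coalgebra.comul (R := ℂ) g : H ⊗[ℂ] H) =
      ∑ i ∈ Finset.range (N g), Δ₁ g i ⊗ₜ[ℂ] Δ₂ g i)
    (ρ : H →ₗ[ℂ] A →ₗ[ℂ] A)
    (hρ_one : ρ 1 = LinearMap.id)
    (hρ_mul : ∀ g h : H, ρ (g * h) = ρ g ∘ₗ ρ h)
    (hact_mul : ∀ (h : H) (a b : A),
      ρ h (a * b) = ∑ i ∈ Finset.range (N h), ρ (Δ₁ h i) a * ρ (Δ₂ h i) b)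
    (hact_one : ∀ h : H, ρ h 1 = (Coalgebra.counit (R := ℂ) h) • (1 : A))
    (f : MultilinearMap ℂ (fun _ : Fin (n+1) => A ⊗[ℂ] H) ℂ)
    (hf : IsHConstant ρ f) :
    ∀ (a : Fin (n+1) → A) (hs : Fin (n+1) → H),
      psiV N Δ₁ Δ₂ ρ (phiV f) (fun i => (a i, hs i))
        = f (fun i => a i ⊗ₜ[ℂ] hs i) :=
  statement17_general N Δ₁ Δ₂ hrep ρ hρ_one f hf

end
end

section
/- The equivariant cochain operators t_n φ(h, a⁰,…,aⁿ) = φ(h₍₂₎, S⁻¹(h₍₁₎)(aⁿ), a⁰, …, a^{n-1}) satisfy t_n^{n+1} = id on equivariant cochains: applying t_n (n+1) times to an equivariant φ returns φ. -/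
noncomputable section

open TensorProduct

variable {H A : Type} [Ring H] [HopfAlgebra ℂ H] [Ring A] [Algebra ℂ A]

/-!
Iterating `tφ(h, a) = φ(h₍₂₎, S⁻¹(h₍₁₎)aⁿ, a⁰, …, aⁿ⁻¹)` gives
`t^{n+1}φ(h, a) = φ(h₍ₙ₊₂₎, S⁻¹(h₍ₙ₊₁₎)a⁰, …, S⁻¹(h₍₁₎)aⁿ)`.
The antipode reverses the iterated coproduct, `Δⁿ⁺¹(S g) = S g₍ₙ₊₂₎ ⊗ ⋯ ⊗ S g₍₁₎`, so writing
`h = S g` with `g = S⁻¹h` this becomes `φ(S g₍₁₎, g₍₂₎a⁰, …, g₍ₙ₊₂₎aⁿ)`. Equivariance, applied to the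
coproduct of `g₍₂₎`, turns it into `φ(S(g₍₃₎) S(g₍₁₎) g₍₂₎, a)`, and
`S(g₍₃₎) S(g₍₁₎) g₍₂₎ = S(g₍₂₎) ε(g₍₁₎) = S g = h`.
-/

section MultilinearMap
variable {R C C' M : Type*} [CommSemiring R] [AddCommMonoid C] [Module R C]
  [AddCommMonoid C'] [Module R C'] [AddCommMonoid M] [Module R M]

def multilinearCurryLast (k : ℕ) :
    MultilinearMap R (fun _ : Fin (k + 2) => C) M →ₗ[R]
      C →ₗ[R] MultilinearMap R (fun _ : Fin (k + 1) => C) M :=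
  (multilinearCurryLeftEquiv R (fun _ => C) M).toLinearMap ∘ₗ
    (MultilinearMap.domDomCongrLinearEquiv R R C M (finRotate (k + 2))).toLinearMap

@[simp]
theorem multilinearCurryLast_apply {k : ℕ} (Λ : MultilinearMap R (fun _ : Fin (k + 2) => C) M)
    (w : C) (ℓ : Fin (k + 1) → C) : multilinearCurryLast k Λ w ℓ = Λ (Fin.snoc ℓ w) := by
  simp [multilinearCurryLast, Fin.snoc_eq_cons_rotate]

theorem curryLeft_multilinearCurryLast {k : ℕ}
    (Λ : MultilinearMap R (fun _ : Fin (k + 3) => C) M) (u w : C) :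
    (multilinearCurryLast (k + 1) Λ w).curryLeft u = multilinearCurryLast k (Λ.curryLeft u) w := by
  ext ℓ
  simp [Fin.cons_snoc_eq_snoc_cons]

def MultilinearMap.revCompLinearMap {k : ℕ} (Λ : MultilinearMap R (fun _ : Fin k => C') M)
    (f : C →ₗ[R] C') : MultilinearMap R (fun _ : Fin k => C) M :=
  (Λ.compLinearMap fun _ => f).domDomCongr Fin.revPerm

@[simp]
theorem MultilinearMap.revCompLinearMap_apply {k : ℕ}
    (Λ : MultilinearMap R (fun _ : Fin k => C') M) (f : C →ₗ[R] C') (ℓ : Fin k → C) :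
    Λ.revCompLinearMap f ℓ = Λ (fun j => f (ℓ j.rev)) := rfl

theorem MultilinearMap.revCompLinearMap_revCompLinearMap {C'' : Type*} [AddCommMonoid C'']
    [Module R C''] {k : ℕ} (Λ : MultilinearMap R (fun _ : Fin k => C'') M) (g : C' →ₗ[R] C'')
    (f : C →ₗ[R] C') :
    (Λ.revCompLinearMap g).revCompLinearMap f = Λ.compLinearMap fun _ => g ∘ₗ f := by
  ext ℓ
  simp only [revCompLinearMap_apply, compLinearMap_apply, LinearMap.comp_apply]
  exact congrArg Λ (funext fun j => by rw [Fin.rev_rev])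

theorem multilinearCurryLast_revCompLinearMap {k : ℕ}
    (Λ : MultilinearMap R (fun _ : Fin (k + 2) => C') M) (f : C →ₗ[R] C') (w : C) :
    multilinearCurryLast k (Λ.revCompLinearMap f) w = (Λ.curryLeft (f w)).revCompLinearMap f := by
  ext ℓ
  simp only [multilinearCurryLast_apply, MultilinearMap.revCompLinearMap_apply,
    MultilinearMap.curryLeft_apply]
  congr 1
  ext j
  cases j using Fin.cases <;> simp [Fin.rev_succ]

end MultilinearMap

section Coalgebra
open Coalgebra
variable {R C M : Type*} [CommSemiring R] [AddCommMonoid C] [Module R C] [Coalgebra R C]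
  [AddCommMonoid M] [Module R M]

theorem Coalgebra.Repr.sum_sum_trilinear_eq {x : C} {ι : Type*} {κ κ' : ι → Type*}
    (𝓡 : Repr R x ι) (𝓢 : ∀ i, Repr R (𝓡.left i) (κ i)) (𝓣 : ∀ i, Repr R (𝓡.right i) (κ' i))
    (T : C →ₗ[R] C →ₗ[R] C →ₗ[R] M) :
    ∑ i ∈ 𝓡.index, ∑ j ∈ (𝓢 i).index, T ((𝓢 i).left j) ((𝓢 i).right j) (𝓡.right i) =
      ∑ i ∈ 𝓡.index, ∑ j ∈ (𝓣 i).index, T (𝓡.left i) ((𝓣 i).left j) ((𝓣 i).right j) := by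
  simpa [map_sum] using
    congr(TensorProduct.lift (TensorProduct.uncurry (.id R) C C M ∘ₗ T) $(sum_tmul_tmul_eq 𝓡 𝓢 𝓣))

variable (R) in
/-- `sweedlerEval R k Λ x` is `Λ` evaluated on the iterated coproduct
`Δᵏ x = ∑ x₍₁₎ ⊗ ⋯ ⊗ x₍ₖ₊₁₎`. -/
def sweedlerEval : (k : ℕ) →
    MultilinearMap R (fun _ : Fin (k + 1) => C) M →ₗ[R] C →ₗ[R] M
  | 0 => (MultilinearMap.ofSubsingletonₗ R R C M (0 : Fin 1)).symm.toLinearMap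
  | k + 1 => LinearMap.lcomp R M comul ∘ₗ TensorProduct.uncurry (.id R) C C M ∘ₗ
      LinearMap.llcomp R C _ _ (sweedlerEval k) ∘ₗ
      (multilinearCurryLeftEquiv R (fun _ => C) M).toLinearMap

theorem sweedlerEval_zero_apply (Λ : MultilinearMap R (fun _ : Fin 1 => C) M) (x : C) :
    sweedlerEval R 0 Λ x = Λ (fun _ => x) := rfl

theorem Coalgebra.Repr.sweedlerEval_succ {k : ℕ}
    (Λ : MultilinearMap R (fun _ : Fin (k + 2) => C) M) {x : C} {ι : Type*} (𝓡 : Repr R x ι) :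
    sweedlerEval R (k + 1) Λ x =
      ∑ i ∈ 𝓡.index, sweedlerEval R k (Λ.curryLeft (𝓡.left i)) (𝓡.right i) := by
  simp [sweedlerEval, ← 𝓡.eq, map_sum]

-- `Λ(Δᵏ⁺¹ x) = ∑ Λ(Δᵏ x₍₁₎, x₍₂₎)`: by coassociativity the last factor can be split off instead of
-- the first.
theorem sweedlerEval_succ_apply_eq_lift_last : ∀ {k : ℕ}
    (Λ : MultilinearMap R (fun _ : Fin (k + 2) => C) M) (x : C),
    sweedlerEval R (k + 1) Λ x = TensorProduct.lift
      (LinearMap.llcomp R C _ _ (sweedlerEval R k) (multilinearCurryLast k Λ)).flip (comul x)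
  | 0, Λ, x => by
    rw [(ℛ R x).sweedlerEval_succ, ← (ℛ R x).eq, map_sum]
    refine Finset.sum_congr rfl fun i _ => ?_
    simp only [sweedlerEval_zero_apply, MultilinearMap.curryLeft_apply, lift.tmul,
      LinearMap.flip_apply, LinearMap.llcomp_apply, multilinearCurryLast_apply]
    congr 1
    ext j
    fin_cases j <;> rfl
  | k + 1, Λ, x => by
    have hΔ (y : C) : comul y = ∑ i ∈ (ℛ R y).index, (ℛ R y).left i ⊗ₜ[R] (ℛ R y).right i :=
      (ℛ R y).eq.symm
    rw [(ℛ R x).sweedlerEval_succ, hΔ x]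
    simp only [map_sum, lift.tmul, LinearMap.flip_apply, LinearMap.llcomp_apply,
      sweedlerEval_succ_apply_eq_lift_last (Λ.curryLeft _)]
    simp only [hΔ, map_sum, lift.tmul, LinearMap.flip_apply, LinearMap.llcomp_apply,
      (ℛ R _).sweedlerEval_succ, curryLeft_multilinearCurryLast]
    exact (ℛ R x).sum_sum_trilinear_eq (fun i => ℛ R _) (fun i => ℛ R _)
      (LinearMap.lflip.toLinearMap ∘ₗ LinearMap.llcomp R C _ _ (sweedlerEval R k) ∘ₗ
        multilinearCurryLast k ∘ₗ Λ.curryLeft) |>.symm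

end Coalgebra

section HopfAlgebra
open Coalgebra HopfAlgebra WithConv
variable {R C M : Type*} [CommSemiring R] [Semiring C] [HopfAlgebra R C]
  [AddCommMonoid M] [Module R M]

-- `(S ⊗ S) ∘ τ ∘ Δ` is a left and `Δ ∘ S` a right convolution inverse of `Δ`.
theorem HopfAlgebra.comul_comp_antipode :
    comul ∘ₗ antipode R = map (antipode R) (antipode R) ∘ₗ
      (TensorProduct.comm R C C).toLinearMap ∘ₗ comul (R := R) (A := C) := by
  have key (y z : C) : map (Algebra.linearMap R C ∘ₗ counit)
      (LinearMap.mul' R C ∘ₗ (antipode R).rTensor C ∘ₗ (TensorProduct.comm R C C).toLinearMap)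
        (TensorProduct.assoc R C C C (comul y ⊗ₜ z)) = 1 ⊗ₜ (antipode R z * y) := by
    rw [← (ℛ R y).eq]
    simp only [sum_tmul, map_sum, TensorProduct.assoc_tmul, map_tmul, LinearMap.comp_apply,
      LinearEquiv.coe_coe, TensorProduct.comm_tmul, LinearMap.rTensor_tmul, LinearMap.mul'_apply,
      Algebra.linearMap_apply, Algebra.algebraMap_eq_smul_one, smul_tmul, ← tmul_sum,
      ← mul_smul_comm, ← Finset.mul_sum, Coalgebra.sum_counit_smul]
  have hG : toConv (map (antipode R) (antipode R) ∘ₗ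
      (TensorProduct.comm R C C).toLinearMap ∘ₗ comul (R := R) (A := C)) * toConv comul = 1 := by
    rw [LinearMap.convMul_def, LinearMap.convOne_def, LinearMap.mul'_tensor]
    refine congrArg toConv ?_
    simp only [coassoc_simps]
    rw [← LinearMap.rTensor_def, mul_antipode_rTensor_comul]
    ext x
    simp only [LinearMap.comp_apply, LinearEquiv.coe_coe]
    rw [← (ℛ R x).eq]
    simp only [map_sum, TensorProduct.comm_tmul, map_tmul, LinearMap.id_apply, key, ← tmul_sum,
      sum_antipode_mul_eq_algebraMap_counit, Algebra.linearMap_apply,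
      Algebra.algebraMap_eq_smul_one, tmul_smul, Algebra.TensorProduct.one_def]
  exact congrArg ofConv (left_inv_eq_right_inv hG LinearMap.comul_right_inv).symm

@[simps]
def Coalgebra.Repr.antipode {x : C} {ι : Type*} (𝓡 : Repr R x ι) :
    Repr R (HopfAlgebra.antipode R x) ι where
  index := 𝓡.index
  left i := HopfAlgebra.antipode R (𝓡.right i)
  right i := HopfAlgebra.antipode R (𝓡.left i)
  eq := by
    rw [← LinearMap.comp_apply (f := comul), comul_comp_antipode]
    simp [← 𝓡.eq, map_sum]

theorem Coalgebra.Repr.sum_sum_antipode_mul_antipode_mul {x : C} {ι : Type*} {κ : ι → Type*}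
    (𝓡 : Repr R x ι) (𝓣 : ∀ i, Repr R (𝓡.right i) (κ i)) :
    ∑ i ∈ 𝓡.index, ∑ j ∈ (𝓣 i).index, HopfAlgebra.antipode R ((𝓣 i).right j) *
      HopfAlgebra.antipode R (𝓡.left i) * (𝓣 i).left j = HopfAlgebra.antipode R x := by
  let T : C →ₗ[R] C →ₗ[R] C →ₗ[R] C := (LinearMap.mul R C ∘ₗ HopfAlgebra.antipode R).compr₂
    (LinearMap.lcomp R C (HopfAlgebra.antipode R) ∘ₗ (LinearMap.mul R C).flip)
  simp only [mul_assoc]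
  refine (𝓡.sum_sum_trilinear_eq (fun i => ℛ R _) 𝓣 T).symm.trans ?_
  simp only [T, LinearMap.compr₂_apply, LinearMap.comp_apply, LinearMap.mul_apply',
    LinearMap.flip_apply, LinearMap.lcomp_apply, ← Finset.mul_sum, sum_antipode_mul_eq_smul,
    mul_smul_comm, mul_one, ← map_smul, ← map_sum, Coalgebra.sum_counit_smul]

theorem sweedlerEval_antipode : ∀ {k : ℕ} (Λ : MultilinearMap R (fun _ : Fin (k + 1) => C) M)
    (x : C),
    sweedlerEval R k Λ (antipode R x) = sweedlerEval R k (Λ.revCompLinearMap (antipode R)) x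
  | 0, _, _ => rfl
  | k + 1, Λ, x => by
    rw [(ℛ R x).antipode.sweedlerEval_succ, sweedlerEval_succ_apply_eq_lift_last, ← (ℛ R x).eq,
      map_sum]
    refine Finset.sum_congr rfl fun i _ => ?_
    rw [Coalgebra.Repr.antipode_left, Coalgebra.Repr.antipode_right, sweedlerEval_antipode]
    simp [multilinearCurryLast_revCompLinearMap]

end HopfAlgebra

section RotTwist
variable {X α : Type*} {n : ℕ}

def rotTwist (τ : X → α → α) : (m : ℕ) → (Fin m → X) → (Fin (n + 1) → α) → Fin (n + 1) → α
  | 0, _, a => a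
  | m + 1, ℓ, a => rotTwist τ m (Fin.tail ℓ) (Fin.cons (τ (ℓ 0) (a (Fin.last n))) (Fin.init a))

theorem Fin.cons_init_apply (x : α) (a : Fin (n + 1) → α) (j : Fin (n + 1)) :
    (Fin.cons x (Fin.init a) : Fin (n + 1) → α) j =
      if (j : ℕ) = 0 then x else a ⟨j - 1, by omega⟩ := by
  cases j using Fin.cases with
  | zero => rfl
  | succ j => rw [Fin.cons_succ, if_neg (by simp)]; rfl

theorem rotTwist_apply (τ : X → α → α) : ∀ (m : ℕ) (hm : m ≤ n + 1) (ℓ : Fin m → X)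
    (a : Fin (n + 1) → α) (j : Fin (n + 1)),
    rotTwist τ m ℓ a j = if h : (j : ℕ) < m
      then τ (ℓ ⟨m - 1 - j, by omega⟩) (a ⟨j + (n + 1 - m), by omega⟩)
      else a ⟨j - m, by omega⟩
  | 0, _, _, _, _ => by simp [rotTwist]
  | m + 1, hm, ℓ, a, j => by
    rw [rotTwist, rotTwist_apply τ m (by omega)]
    simp only [Fin.cons_init_apply, Fin.tail]
    split_ifs <;> first | omega | (congr 2 <;> ext <;> simp only [Fin.val_succ, Fin.val_last, Fin.val_zero] <;> omega)

theorem rotTwist_self (τ : X → α → α) (ℓ : Fin (n + 1) → X) (a : Fin (n + 1) → α) :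
    rotTwist τ (n + 1) ℓ a = fun j => τ (ℓ j.rev) (a j) := by
  ext j
  rw [rotTwist_apply τ (n + 1) le_rfl, dif_pos j.isLt]
  congr 2 <;> ext <;> simp only [Fin.val_rev] <;> omega

end RotTwist

theorem sweedler_one_s19 {X : Type} (N : X → ℕ) (Δ₁ Δ₂ : X → ℕ → X) (g : X) (F : (Fin 2 → X) → ℂ) :
    sweedler N Δ₁ Δ₂ 1 g F = ∑ i ∈ Finset.range (N g), F ![Δ₁ g i, Δ₂ g i] := rfl

section Sweedler
open HopfAlgebra
variable (N : H → ℕ) (Δ₁ Δ₂ : H → ℕ → H)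

theorem iterate_cycOpEq_apply (ρ : H →ₗ[ℂ] A →ₗ[ℂ] A) (Sinv : H →ₗ[ℂ] H) {n : ℕ}
    (φf : H → (Fin (n + 1) → A) → ℂ) : ∀ (m : ℕ) (h : H) (a : Fin (n + 1) → A),
    (cycOpEq N Δ₁ Δ₂ ρ Sinv)^[m] φf h a = sweedler N Δ₁ Δ₂ m h
      (fun ℓ => φf (ℓ (Fin.last m)) (rotTwist (fun u => ρ (Sinv u)) m (Fin.init ℓ) a))
  | 0, _, _ => rfl
  | m + 1, h, a => by
    rw [Function.iterate_succ_apply', cycOpEq, sweedler_one_s19, sweedler]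
    refine Finset.sum_congr rfl fun i _ => ?_
    rw [iterate_cycOpEq_apply ρ Sinv φf m]
    rfl

def sweedlerRepr (hrep : ∀ g : H, (Coalgebra.comul (R := ℂ) g : H ⊗[ℂ] H) =
      ∑ i ∈ Finset.range (N g), Δ₁ g i ⊗ₜ[ℂ] Δ₂ g i) (g : H) : Coalgebra.Repr ℂ g ℕ :=
  ⟨Finset.range (N g), Δ₁ g, Δ₂ g, (hrep g).symm⟩

theorem sweedler_eq_sweedlerEval (hrep : ∀ g : H, (Coalgebra.comul (R := ℂ) g : H ⊗[ℂ] H) =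
      ∑ i ∈ Finset.range (N g), Δ₁ g i ⊗ₜ[ℂ] Δ₂ g i) :
    ∀ (k : ℕ) (Λ : MultilinearMap ℂ (fun _ : Fin (k + 1) => H) ℂ) (g : H),
      sweedler N Δ₁ Δ₂ k g Λ = sweedlerEval ℂ k Λ g
  | 0, Λ, g => by
    rw [sweedler, sweedlerEval_zero_apply]
    congr 1
    ext j
    fin_cases j
    rfl
  | k + 1, Λ, g => by
    rw [sweedler, (sweedlerRepr N Δ₁ Δ₂ hrep g).sweedlerEval_succ]
    exact Finset.sum_congr rfl fun i _ =>
      sweedler_eq_sweedlerEval hrep k (Λ.curryLeft (Δ₁ g i)) (Δ₂ g i)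

theorem IsEquivariant.sweedler_antipode_apply_zero
    (hrep : ∀ g : H, (Coalgebra.comul (R := ℂ) g : H ⊗[ℂ] H) =
      ∑ i ∈ Finset.range (N g), Δ₁ g i ⊗ₜ[ℂ] Δ₂ g i) {ρ : H →ₗ[ℂ] A →ₗ[ℂ] A} {n : ℕ}
    {φ : H →ₗ[ℂ] MultilinearMap ℂ (fun _ : Fin (n + 1) => A) ℂ}
    (hφ : IsEquivariant N Δ₁ Δ₂ ρ (fun h a => φ h a)) (g : H) (a : Fin (n + 1) → A) :
    sweedler N Δ₁ Δ₂ (n + 1) g (fun ℓ => φ (antipode ℂ (ℓ 0)) (fun j => ρ (ℓ j.succ) (a j))) =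
      φ (antipode ℂ g) a := by
  rw [sweedler]
  simp only [Fin.cons_zero, Fin.cons_succ]
  rw [Finset.sum_congr rfl fun i _ => (hφ (Δ₂ g i) (antipode ℂ (Δ₁ g i)) a).symm]
  simp only [sweedler_one_s19, Matrix.cons_val_one, Matrix.cons_val_zero]
  rw [← (sweedlerRepr N Δ₁ Δ₂ hrep g).sum_sum_antipode_mul_antipode_mul
    (fun i => sweedlerRepr N Δ₁ Δ₂ hrep (Δ₂ g i))]
  simp [sweedlerRepr, map_sum]

end Sweedler

theorem statement19_general {n : ℕ}
    (N : H → ℕ) (Δ₁ Δ₂ : H → ℕ → H)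
    (hrep : ∀ g : H, (Coalgebra.comul (R := ℂ) g : H ⊗[ℂ] H) =
      ∑ i ∈ Finset.range (N g), Δ₁ g i ⊗ₜ[ℂ] Δ₂ g i)
    (ρ : H →ₗ[ℂ] A →ₗ[ℂ] A)
    (Sinv : H →ₗ[ℂ] H)
    (hSinv : ∀ h : H, Sinv (HopfAlgebra.antipode (R := ℂ) h) = h ∧
      HopfAlgebra.antipode (R := ℂ) (Sinv h) = h)
    (φ : H →ₗ[ℂ] MultilinearMap ℂ (fun _ : Fin (n+1) => A) ℂ)
    (hφ : IsEquivariant N Δ₁ Δ₂ ρ (fun h a => φ h a)) :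
    ∀ (h : H) (a : Fin (n+1) → A),
      ((cycOpEq N Δ₁ Δ₂ ρ Sinv)^[n+1] (fun h' a' => φ h' a')) h a = φ h a := by
  intro h a
  let Θ : MultilinearMap ℂ (fun _ : Fin (n + 1 + 1) => H) ℂ := LinearMap.uncurryLeft
    (MultilinearMap.compLinearMapₗ (fun j => ρ.flip (a j)) ∘ₗ φ ∘ₗ HopfAlgebra.antipode ℂ)
  have hΘ : (fun ℓ => φ (ℓ (Fin.last (n + 1)))
      (rotTwist (fun u => ρ (Sinv u)) (n + 1) (Fin.init ℓ) a)) = Θ.revCompLinearMap Sinv := by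
    ext ℓ
    simp [Θ, rotTwist_self, (hSinv _).2, Fin.rev_succ, Fin.init, Fin.tail]
  have hSinv_comp : Sinv ∘ₗ HopfAlgebra.antipode ℂ = LinearMap.id :=
    LinearMap.ext fun x => (hSinv x).1
  rw [iterate_cycOpEq_apply, hΘ, sweedler_eq_sweedlerEval N Δ₁ Δ₂ hrep, ← (hSinv h).2,
    sweedlerEval_antipode, MultilinearMap.revCompLinearMap_revCompLinearMap, hSinv_comp,
    MultilinearMap.compLinearMap_id, ← sweedler_eq_sweedlerEval N Δ₁ Δ₂ hrep]
  exact hφ.sweedler_antipode_apply_zero N Δ₁ Δ₂ hrep (Sinv h) a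

/-- The cyclic operator
`tφ(h, a⁰,…,aⁿ) = φ(h₍₂₎, S⁻¹(h₍₁₎)(aⁿ), a⁰, …, aⁿ⁻¹)` satisfies `t^{n+1} = id`
on equivariant cochains. -/
theorem statement19 {n : ℕ}
    (N : H → ℕ) (Δ₁ Δ₂ : H → ℕ → H)
    (hrep : ∀ g : H, (Coalgebra.comul (R := ℂ) g : H ⊗[ℂ] H) =
      ∑ i ∈ Finset.range (N g), Δ₁ g i ⊗ₜ[ℂ] Δ₂ g i)
    (ρ : H →ₗ[ℂ] A →ₗ[ℂ] A)
    (hρ_one : ρ 1 = LinearMap.id)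
    (hρ_mul : ∀ g h : H, ρ (g * h) = ρ g ∘ₗ ρ h)
    (hact_mul : ∀ (h : H) (a b : A),
      ρ h (a * b) = ∑ i ∈ Finset.range (N h), ρ (Δ₁ h i) a * ρ (Δ₂ h i) b)
    (hact_one : ∀ h : H, ρ h 1 = (Coalgebra.counit (R := ℂ) h) • (1 : A))
    (Sinv : H →ₗ[ℂ] H)
    (hSinv : ∀ h : H, Sinv (HopfAlgebra.antipode (R := ℂ) h) = h ∧
      HopfAlgebra.antipode (R := ℂ) (Sinv h) = h)
    (φ : H →ₗ[ℂ] MultilinearMap ℂ (fun _ : Fin (n+1) => A) ℂ)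
    (hφ : IsEquivariant N Δ₁ Δ₂ ρ (fun h a => φ h a)) :
    ∀ (h : H) (a : Fin (n+1) → A),
      ((cycOpEq N Δ₁ Δ₂ ρ Sinv)^[n+1] (fun h' a' => φ h' a')) h a = φ h a :=
  statement19_general N Δ₁ Δ₂ hrep ρ Sinv hSinv φ hφ
end
end
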